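/- arXiv:2101.05257 — 9 statements merged into one kernel-verified Lean document; each statement's English description precedes it below -/
import Mathlib

section
/- Let {b_n} be a sequence of integers and {a_n} a sequence of positive integers with a_n > 1 for all sufficiently large n, and suppose lim_{n→∞} |b_n|/(a_{n-1} a_n) = 0. Then the sum ∑_{n=1}^∞ b_n / (∏_{i=1}^n a_i) is rational if and only if there exists a positive integer B and a sequence of integers {c_n} such that for all sufficiently large n, B·b_n = c_n·a_n − c_{n+1} and |c_{n+1}| < a_n/2. -/
/-! Write `P n = a 0 ⋯ a (n - 1)`. If the sum equals `p / B`, the scaled remainders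
`c n = B · P n · ∑_{k ≥ n} b k / P (k + 1)` are integers (by induction, starting from `c 0 = p`)
and satisfy `B b n = c n a n - c (n + 1)`. Since `|b k| = o(a (k - 1) a k)` and eventually
`a k ≥ 2`, the remainder from `n + 1` on is `o(1 / P n)`, so `c (n + 1) = o(a n)`.
Conversely, the recurrence turns the series from some `N` on into a telescoping sum of
`c n / P n - c (n + 1) / P (n + 1)`, and `|c (n + 1)| < a n / 2` together with the geometric
growth of `P` makes `c n / P n → 0`; so the sum is `∑_{n < N} b n / P (n + 1) + c N / (B · P N)`. -/

open Filter Finset Topology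

namespace ErdosStraus

noncomputable def term (a b : ℕ → ℝ) (n : ℕ) : ℝ := b n / ∏ i ∈ range (n + 1), a i

noncomputable def tail (a b : ℕ → ℝ) (n : ℕ) : ℝ := ∑' k, term a b (k + n)

section Real

variable {a b : ℕ → ℝ} {N n : ℕ} {ε : ℝ}

lemma prod_range_mul_two_pow_le (ha : ∀ i, 0 < a i) (h2 : ∀ i, N ≤ i → 2 ≤ a i) (hn : N ≤ n)
    (j : ℕ) : (∏ i ∈ range n, a i) * 2 ^ j ≤ ∏ i ∈ range (n + j), a i := by
  induction j with
  | zero => simp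
  | succ j ih =>
    rw [← add_assoc, prod_range_succ, pow_succ, ← mul_assoc]
    exact mul_le_mul ih (h2 _ (by omega)) zero_le_two (prod_pos fun i _ => ha i).le

lemma tendsto_prod_range_atTop (ha : ∀ i, 0 < a i) (h2 : ∀ᶠ i in atTop, 2 ≤ a i) :
    Tendsto (fun n => ∏ i ∈ range n, a i) atTop atTop := by
  obtain ⟨N, hN⟩ := eventually_atTop.1 h2
  rw [← tendsto_add_atTop_iff_nat N]
  refine tendsto_atTop_mono (fun j => ?_) <|
    (tendsto_pow_atTop_atTop_of_one_lt one_lt_two).const_mul_atTop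
      (prod_pos fun i (_ : i ∈ range N) => ha i)
  rw [add_comm]
  exact prod_range_mul_two_pow_le ha hN le_rfl j

lemma eventually_abs_le_mul_of_tendsto (ha : ∀ i, 0 < a i)
    (hlim : Tendsto (fun n => |b n| / (a (n - 1) * a n)) atTop (𝓝 0)) (hε : 0 < ε) :
    ∀ᶠ n in atTop, |b (n + 1)| ≤ ε * (a n * a (n + 1)) := by
  filter_upwards [(tendsto_add_atTop_iff_nat 1).2 hlim |>.eventually_lt_const hε] with n hn
  rw [Nat.add_sub_cancel, div_lt_iff₀ (mul_pos (ha n) (ha (n + 1)))] at hn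
  exact hn.le

lemma abs_term_succ_le (ha : ∀ i, 0 < a i) {k : ℕ} (hb : |b (k + 1)| ≤ ε * (a k * a (k + 1))) :
    |term a b (k + 1)| ≤ ε / ∏ i ∈ range k, a i := by
  have hP := prod_pos fun i (_ : i ∈ range k) => ha i
  have hQ : 0 < (∏ i ∈ range k, a i) * a k * a (k + 1) := mul_pos (mul_pos hP (ha k)) (ha _)
  rw [term, prod_range_succ, prod_range_succ, abs_div, abs_of_pos hQ, div_le_div_iff₀ hQ hP]
  calc |b (k + 1)| * ∏ i ∈ range k, a i ≤ ε * (a k * a (k + 1)) * ∏ i ∈ range k, a i := by gcongr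
    _ = ε * ((∏ i ∈ range k, a i) * a k * a (k + 1)) := by ring

lemma abs_term_le_geometric (ha : ∀ i, 0 < a i) (hε : 0 ≤ ε) (h2 : ∀ i, N ≤ i → 2 ≤ a i)
    (hb : ∀ i, N ≤ i → |b (i + 1)| ≤ ε * (a i * a (i + 1))) (hn : N ≤ n) (j : ℕ) :
    |term a b (j + (n + 1))| ≤ ε / (∏ i ∈ range n, a i) * (1 / 2) ^ j := by
  rw [show j + (n + 1) = n + j + 1 by omega, one_div_pow, mul_one_div, div_div]
  refine (abs_term_succ_le ha (hb _ (by omega))).trans ?_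
  have hP := prod_pos fun i (_ : i ∈ range n) => ha i
  gcongr
  exact prod_range_mul_two_pow_le ha h2 hn j

lemma summable_term (ha : ∀ i, 0 < a i) (hε : 0 ≤ ε) (h2 : ∀ᶠ i in atTop, 2 ≤ a i)
    (hb : ∀ᶠ i in atTop, |b (i + 1)| ≤ ε * (a i * a (i + 1))) : Summable (term a b) := by
  obtain ⟨N, hN⟩ := eventually_atTop.1 (h2.and hb)
  rw [← summable_nat_add_iff (N + 1)]
  exact (summable_geometric_two.mul_left _).of_norm_bounded
    (abs_term_le_geometric ha hε (fun i hi => (hN i hi).1) (fun i hi => (hN i hi).2) le_rfl)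

lemma abs_tail_succ_le (ha : ∀ i, 0 < a i) (hε : 0 ≤ ε) (h2 : ∀ i, N ≤ i → 2 ≤ a i)
    (hb : ∀ i, N ≤ i → |b (i + 1)| ≤ ε * (a i * a (i + 1))) (hn : N ≤ n) :
    |tail a b (n + 1)| ≤ 2 * ε / ∏ i ∈ range n, a i := by
  rw [mul_comm 2, mul_div_right_comm]
  exact tsum_of_norm_bounded (f := fun j => term a b (j + (n + 1)))
    (hasSum_geometric_two.mul_left _) (abs_term_le_geometric ha hε h2 hb hn)

lemma tail_eq_term_add_tail_succ (hs : Summable (term a b)) (n : ℕ) :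
    tail a b n = term a b n + tail a b (n + 1) := by
  rw [tail, ((summable_nat_add_iff n).2 hs).tsum_eq_zero_add, tail, zero_add]
  simp only [add_assoc, add_comm 1 n]

lemma mul_term_eq_sub_of_recurrence {B : ℝ} {c : ℕ → ℝ} (ha : ∀ i, 0 < a i)
    (hrec : B * b n = c n * a n - c (n + 1)) :
    B * term a b n = c n / ∏ i ∈ range n, a i - c (n + 1) / ∏ i ∈ range (n + 1), a i := by
  have hP := prod_pos fun i (_ : i ∈ range n) => ha i
  have := ha n
  rw [term, mul_div_assoc', hrec, prod_range_succ]
  field_simp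

lemma tsum_term_eq_of_recurrence {B : ℝ} {c : ℕ → ℝ} (hB : B ≠ 0) (ha : ∀ i, 0 < a i)
    (hs : Summable (term a b)) (hrec : ∀ n, N ≤ n → B * b n = c n * a n - c (n + 1))
    (hc : Tendsto (fun n => c n / ∏ i ∈ range n, a i) atTop (𝓝 0)) :
    ∑' n, term a b n = ∑ n ∈ range N, term a b n + c N / (B * ∏ i ∈ range N, a i) := by
  set g : ℕ → ℝ := fun n => c n / ∏ i ∈ range n, a i
  have htelescope (k : ℕ) : B * term a b (k + N) = g (k + N) - g (k + 1 + N) := by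
    rw [add_right_comm]
    exact mul_term_eq_sub_of_recurrence ha (hrec _ (by omega))
  have hlim : Tendsto (fun m => ∑ k ∈ range m, B * term a b (k + N)) atTop (𝓝 (g N)) := by
    simp only [htelescope, sum_range_sub' (fun k => g (k + N)), zero_add]
    simpa using tendsto_const_nhds.sub ((tendsto_add_atTop_iff_nat N).2 hc)
  have htail : B * tail a b N = g N :=
    tendsto_nhds_unique (((summable_nat_add_iff N).2 hs).hasSum.mul_left B).tendsto_sum_nat hlim
  rw [← hs.sum_add_tsum_nat_add N, mul_comm B, ← div_div]
  change _ + tail a b N = _ + g N / B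
  rw [← htail, mul_div_cancel_left₀ _ hB]

lemma tendsto_div_prod_range_of_abs_le {c : ℕ → ℝ} {C : ℝ} (ha : ∀ i, 0 < a i)
    (h2 : ∀ᶠ i in atTop, 2 ≤ a i) (hc : ∀ᶠ n in atTop, |c (n + 1)| ≤ C * a n) :
    Tendsto (fun n => c n / ∏ i ∈ range n, a i) atTop (𝓝 0) := by
  rw [← tendsto_add_atTop_iff_nat 1]
  refine squeeze_zero_norm' (a := fun n => C * (∏ i ∈ range n, a i)⁻¹) ?_ (by
    rw [← mul_zero C]
    exact (tendsto_prod_range_atTop ha h2).inv_tendsto_atTop.const_mul C)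
  filter_upwards [hc] with n hn
  have hP := prod_pos fun i (_ : i ∈ range n) => ha i
  rw [Real.norm_eq_abs, abs_div, prod_range_succ, abs_of_pos (mul_pos hP (ha n)),
    div_le_iff₀ (mul_pos hP (ha n))]
  calc |c (n + 1)| ≤ C * a n := hn
    _ = C * (∏ i ∈ range n, a i)⁻¹ * ((∏ i ∈ range n, a i) * a n) := by field_simp

end Real

def scaledRemainder (a b : ℕ → ℤ) (B c₀ : ℤ) : ℕ → ℤ
  | 0 => c₀
  | n + 1 => scaledRemainder a b B c₀ n * a n - B * b n

section Int

variable {a b : ℕ → ℤ}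

lemma scaledRemainder_eq_mul_tail (ha : ∀ i, 0 < a i)
    (hs : Summable (term (fun i => (a i : ℝ)) fun i => (b i : ℝ))) {B c₀ : ℤ}
    (hc₀ : (c₀ : ℝ) = B * ∑' n, term (fun i => (a i : ℝ)) (fun i => (b i : ℝ)) n) (n : ℕ) :
    (scaledRemainder a b B c₀ n : ℝ) =
      B * (∏ i ∈ range n, (a i : ℝ)) * tail (fun i => (a i : ℝ)) (fun i => (b i : ℝ)) n := by
  induction n with
  | zero => simp [scaledRemainder, tail, hc₀]
  | succ n ih =>
    have hP := prod_pos fun i (_ : i ∈ range n) => (Int.cast_pos.2 (ha i) : (0 : ℝ) < a i)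
    have := (Int.cast_pos.2 (ha n) : (0 : ℝ) < a n)
    rw [scaledRemainder, Int.cast_sub, Int.cast_mul, Int.cast_mul, ih,
      tail_eq_term_add_tail_succ hs n, term, prod_range_succ]
    field_simp
    ring

lemma exists_recurrence_of_tsum_eq_rat (ha : ∀ i, 0 < a i) (h2 : ∀ᶠ i in atTop, (2 : ℝ) ≤ a i)
    (hb : ∀ ε > 0, ∀ᶠ i in atTop, |(b (i + 1) : ℝ)| ≤ ε * (a i * a (i + 1)))
    (hs : Summable (term (fun i => (a i : ℝ)) fun i => (b i : ℝ))) {q : ℚ}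
    (hq : ∑' n, term (fun i => (a i : ℝ)) (fun i => (b i : ℝ)) n = q) :
    ∃ B : ℤ, 0 < B ∧ ∃ c : ℕ → ℤ, ∀ᶠ n in atTop,
      B * b n = c n * a n - c (n + 1) ∧ |(c (n + 1) : ℝ)| < a n / 2 := by
  set ε : ℝ := 1 / (8 * q.den)
  obtain ⟨N, hN⟩ := eventually_atTop.1 (h2.and (hb ε (by positivity)))
  refine ⟨q.den, by positivity, scaledRemainder a b q.den q.num,
    eventually_atTop.2 ⟨N, fun n hn => ⟨by rw [scaledRemainder]; ring, ?_⟩⟩⟩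
  have ha' : ∀ i, (0 : ℝ) < a i := fun i => Int.cast_pos.2 (ha i)
  have hP := prod_pos fun i (_ : i ∈ range n) => ha' i
  have hc := scaledRemainder_eq_mul_tail ha hs (B := q.den) (c₀ := q.num)
    (by rw [hq, Rat.cast_def]; push_cast; field_simp) (n + 1)
  have htail := abs_tail_succ_le (b := fun i => (b i : ℝ)) ha' (by positivity)
    (fun i hi => (hN i hi).1) (fun i hi => (hN i hi).2) hn
  calc |(scaledRemainder a b q.den q.num (n + 1) : ℝ)|
      = q.den * ((∏ i ∈ range n, (a i : ℝ)) * a n) *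
          |tail (fun i => (a i : ℝ)) (fun i => (b i : ℝ)) (n + 1)| := by
        have := ha' n
        rw [hc, Int.cast_natCast, prod_range_succ, abs_mul, abs_of_pos (by positivity)]
    _ ≤ q.den * ((∏ i ∈ range n, (a i : ℝ)) * a n) * (2 * ε / ∏ i ∈ range n, (a i : ℝ)) := by
        have := ha' n
        gcongr
    _ = a n / 4 := by simp only [ε]; field_simp; ring
    _ < a n / 2 := by linarith [ha' n]

end Int

end ErdosStraus

theorem erdos_straus_thm_2_1 (a b : ℕ → ℤ)
    (ha : ∀ n, 0 < a n) (ha1 : ∀ᶠ n in atTop, 1 < a n)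
    (hlim : Tendsto (fun n => |(b n : ℝ)| / ((a (n - 1) : ℝ) * (a n : ℝ))) atTop (nhds 0)) :
    (∃ q : ℚ, (∑' n : ℕ, (b n : ℝ) / ∏ i ∈ Finset.range (n + 1), (a i : ℝ)) = q) ↔
      (∃ B : ℤ, 0 < B ∧ ∃ c : ℕ → ℤ, ∀ᶠ n in atTop,
        B * b n = c n * a n - c (n + 1) ∧ |(c (n + 1) : ℝ)| < (a n : ℝ) / 2) := by
  open ErdosStraus in
  change (∃ q : ℚ, ∑' n, term (fun i => (a i : ℝ)) (fun i => (b i : ℝ)) n = q) ↔ _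
  have ha' : ∀ i, (0 : ℝ) < a i := fun i => Int.cast_pos.2 (ha i)
  have h2 : ∀ᶠ i in atTop, (2 : ℝ) ≤ a i := ha1.mono fun i hi => by exact_mod_cast hi
  have hb := fun ε (hε : 0 < ε) => eventually_abs_le_mul_of_tendsto ha' hlim hε
  have hs := summable_term (b := fun i => (b i : ℝ)) ha' zero_le_one h2 (hb 1 one_pos)
  constructor
  · rintro ⟨q, hq⟩
    exact exists_recurrence_of_tsum_eq_rat ha h2 hb hs hq
  · rintro ⟨B, hB, c, hc⟩
    obtain ⟨N, hN⟩ := eventually_atTop.1 hc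
    rw [tsum_term_eq_of_recurrence (B := B) (c := fun n => c n) (N := N) (by positivity) ha' hs
      (fun n hn => by exact_mod_cast (hN n hn).1)
      (tendsto_div_prod_range_of_abs_le (C := 1 / 2) ha' h2
        (hc.mono fun n hn => by linarith [hn.2]))]
    exact ⟨∑ n ∈ range N, (b n : ℚ) / ∏ i ∈ range (n + 1), (a i : ℚ) +
      c N / (B * ∏ i ∈ range N, (a i : ℚ)), by push_cast; rfl⟩
end

section
/- Let A > 1 be real, {d_n} a sequence of reals with d_n > 1 for all n such that the infinite product ∏ d_n converges, and let {a_n}, {b_n} be sequences of positive integers with lim_{n→∞} a_n^{1/2^n} = A, with A / a_n^{1/2^n} > ∏_{j=n}^∞ d_j for all n ≥ s (for some s > 0), and with d_n^{2^n}/b_n → ∞. Then ∑_{n=1}^∞ b_n/a_n is irrational. -/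
/-!
Suppose the sum equals `p / q`. Then `q · a₀ ⋯ a_{N-1} · ∑_{n ≥ N} bₙ / aₙ` is a positive integer
for every `N`. The terms are `O(β ^ 2ⁿ)` for some `β` with `A β² < 1`, while `a₀ ⋯ a_{N-1}` is
`O(A ^ 2^N)`, so the tail from `N + 1` is negligible and `a_N ≤ 2 q b_N a₀ ⋯ a_{N-1}` for large `N`.

Pass to logarithms: put `xₙ = log aₙ`, `L = log A`, `tₙ = ∑_{j ≥ n} log dⱼ`, and let the slack
`wₙ = 2ⁿ L - xₙ - 2ⁿ t_{n+1}`, which is nonnegative for `n ≥ s` by the tail-product hypothesis.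
Since `d_N ^ 2^N / b_N → ∞`, the inequality above becomes `w_N ≥ 1 + ∑_{s ≤ k < N} w_k` for large
`N`, so the slack at least doubles at each step and `w_N / 2^N` stays away from `0`. But
`w_N / 2^N = L - x_N / 2^N - t_{N+1} → 0`.
-/

open Filter Finset Real Topology

lemma Real.summable_log_of_multipliable {ι : Type*} {f : ι → ℝ} (hf : ∀ i, 1 ≤ f i)
    (hfm : Multipliable f) : Summable fun i => log (f i) := by
  classical
  have hpos : ∀ i, 0 < f i := fun i => one_pos.trans_le (hf i)
  refine summable_of_sum_le (c := log (∏' i, f i)) (fun i => log_nonneg (hf i)) fun F => ?_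
  rw [← log_prod fun i _ => (hpos i).ne']
  refine log_le_log (prod_pos fun i _ => hpos i) ?_
  refine ge_of_tendsto hfm.hasProd (eventually_atTop.2 ⟨F, fun G hFG => ?_⟩)
  rw [← prod_sdiff hFG]
  exact le_mul_of_one_le_left (prod_nonneg fun i _ => (hpos i).le) (one_le_prod fun i _ => hf i)

section DoublyExponentialDecay

variable {f : ℕ → ℝ} {β : ℝ}

lemma pow_two_pow_add_le (hβ0 : 0 ≤ β) (hβ1 : β ≤ 1) (N i : ℕ) :
    β ^ 2 ^ (i + N) ≤ β ^ 2 ^ N * β ^ i := by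
  rw [← pow_add]
  refine pow_le_pow_of_le_one hβ0 hβ1 ?_
  have := Nat.lt_two_pow_self (n := i)
  rw [pow_add]
  nlinarith [Nat.one_le_two_pow (n := N)]

lemma summable_nat_add_of_le_pow_two_pow (hβ0 : 0 ≤ β) (hβ1 : β < 1) (hf0 : ∀ n, 0 ≤ f n)
    {N : ℕ} (hfN : ∀ n ≥ N, f n ≤ β ^ 2 ^ n) : Summable fun i => f (i + N) :=
  Summable.of_nonneg_of_le (fun _ => hf0 _)
    (fun i => (hfN _ le_add_self).trans (pow_two_pow_add_le hβ0 hβ1.le N i))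
    ((summable_geometric_of_lt_one hβ0 hβ1).mul_left _)

lemma tsum_nat_add_le_of_le_pow_two_pow (hβ0 : 0 ≤ β) (hβ1 : β < 1) (hf0 : ∀ n, 0 ≤ f n)
    {N : ℕ} (hfN : ∀ n ≥ N, f n ≤ β ^ 2 ^ n) : ∑' i, f (i + N) ≤ β ^ 2 ^ N / (1 - β) :=
  calc ∑' i, f (i + N) ≤ ∑' i, β ^ 2 ^ N * β ^ i :=
        Summable.tsum_le_tsum
          (fun i => (hfN _ le_add_self).trans (pow_two_pow_add_le hβ0 hβ1.le N i))
          (summable_nat_add_of_le_pow_two_pow hβ0 hβ1 hf0 hfN)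
          ((summable_geometric_of_lt_one hβ0 hβ1).mul_left _)
    _ = β ^ 2 ^ N / (1 - β) := by
        rw [tsum_mul_left, tsum_geometric_of_lt_one hβ0 hβ1, div_eq_mul_inv]

lemma prod_range_le_mul_pow_two_pow {a : ℕ → ℝ} {A : ℝ} {s N : ℕ} (hA : 1 ≤ A)
    (ha : ∀ k, 0 ≤ a k) (has : ∀ k ≥ s, a k ≤ A ^ 2 ^ k) (hsN : s ≤ N) :
    ∏ k ∈ range N, a k ≤ (∏ k ∈ range s, a k) * A ^ 2 ^ N := by
  rw [← prod_range_mul_prod_Ico _ hsN]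
  gcongr
  · exact prod_nonneg fun k _ => ha k
  calc ∏ k ∈ Ico s N, a k ≤ ∏ k ∈ Ico s N, A ^ 2 ^ k :=
        prod_le_prod (fun k _ => ha k) fun k hk => has k (mem_Ico.1 hk).1
    _ = A ^ ∑ k ∈ Ico s N, 2 ^ k := prod_pow_eq_pow_sum _ _ _
    _ ≤ A ^ 2 ^ N := pow_le_pow_right₀ hA (Nat.geomSum_lt le_rfl fun k hk => (mem_Ico.1 hk).2).le

lemma tendsto_prod_mul_tsum_nat_add_succ {a : ℕ → ℝ} {A : ℝ} {s M : ℕ} (hA : 1 ≤ A)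
    (ha : ∀ k, 0 ≤ a k) (has : ∀ k ≥ s, a k ≤ A ^ 2 ^ k) (hβ0 : 0 ≤ β) (hAβ : A * β ^ 2 < 1)
    (hf0 : ∀ n, 0 ≤ f n) (hfM : ∀ n ≥ M, f n ≤ β ^ 2 ^ n) :
    Tendsto (fun N => (∏ k ∈ range N, a k) * ∑' i, f (i + (N + 1))) atTop (𝓝 0) := by
  have hβ1 : β < 1 := (sq_lt_one_iff₀ hβ0).1 (by nlinarith)
  set C := (∏ k ∈ range s, a k) / (1 - β)
  have hlim : Tendsto (fun N : ℕ => C * (A * β ^ 2) ^ 2 ^ N) atTop (𝓝 0) := by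
    simpa using ((tendsto_pow_atTop_nhds_zero_of_lt_one (by positivity) hAβ).comp
      (tendsto_pow_atTop_atTop_of_one_lt (α := ℕ) one_lt_two)).const_mul C
  refine squeeze_zero' (Eventually.of_forall fun N =>
    mul_nonneg (prod_nonneg fun k _ => ha k) (tsum_nonneg fun i => hf0 _)) ?_ hlim
  filter_upwards [eventually_ge_atTop s, eventually_ge_atTop M] with N hsN hMN
  calc (∏ k ∈ range N, a k) * ∑' i, f (i + (N + 1))
      ≤ ((∏ k ∈ range s, a k) * A ^ 2 ^ N) * (β ^ 2 ^ (N + 1) / (1 - β)) :=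
        mul_le_mul (prod_range_le_mul_pow_two_pow hA ha has hsN)
          (tsum_nat_add_le_of_le_pow_two_pow hβ0 hβ1 hf0 fun n hn => hfM n (by omega))
          (tsum_nonneg fun i => hf0 _) (mul_nonneg (prod_nonneg fun k _ => ha k) (by positivity))
    _ = C * (A * β ^ 2) ^ 2 ^ N := by
        rw [pow_succ, pow_mul, mul_pow]
        ring

end DoublyExponentialDecay

lemma exists_div_le_pow_two_pow {A : ℝ} {a b d : ℕ → ℝ} (hA : 1 < A) (ha : ∀ n, 0 < a n)
    (hb : ∀ n, 0 < b n) (hd : Tendsto d atTop (𝓝 1))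
    (haA : Tendsto (fun n => a n ^ ((1 : ℝ) / 2 ^ n)) atTop (𝓝 A))
    (hdb : Tendsto (fun n => d n ^ 2 ^ n / b n) atTop atTop) :
    ∃ β, 0 ≤ β ∧ β < 1 ∧ A * β ^ 2 < 1 ∧ ∀ᶠ n in atTop, b n / a n ≤ β ^ 2 ^ n := by
  have hA0 : 0 < A := one_pos.trans hA
  obtain ⟨β, hβA, hβ⟩ : ∃ β, 1 / A < β ∧ β < 1 / √A :=
    exists_between (one_div_lt_one_div_of_lt (by positivity) (sqrt_lt_self_iff.2 hA))
  have hβ0 : 0 ≤ β := (one_div_pos.2 hA0).le.trans hβA.le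
  have hAβ : A * β ^ 2 < 1 := by
    have h := pow_lt_pow_left₀ hβ hβ0 two_ne_zero
    rw [div_pow, one_pow, sq_sqrt hA0.le, lt_div_iff₀ hA0] at h
    linarith
  refine ⟨β, hβ0, (sq_lt_one_iff₀ hβ0).1 (by nlinarith), hAβ, ?_⟩
  have hlim : Tendsto (fun n => d n / a n ^ ((1 : ℝ) / 2 ^ n)) atTop (𝓝 (1 / A)) :=
    hd.div haA hA0.ne'
  filter_upwards [hlim.eventually_le_const hβA, hd.eventually_const_lt zero_lt_one,
    hdb.eventually_ge_atTop 1] with n hβn hdn hbn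
  rw [le_div_iff₀ (hb n), one_mul] at hbn
  calc b n / a n ≤ d n ^ 2 ^ n / a n := div_le_div_of_nonneg_right hbn (ha n).le
    _ = (d n / a n ^ ((1 : ℝ) / 2 ^ n)) ^ 2 ^ n := by
        rw [div_pow, ← rpow_natCast (a n ^ _), ← rpow_mul (ha n).le]
        norm_num
    _ ≤ β ^ 2 ^ n := pow_le_pow_left₀ (div_nonneg hdn.le (rpow_nonneg (ha n).le _)) hβn _

section RationalSum

variable {a b : ℕ → ℤ} {r : ℚ}

lemma one_le_den_mul_prod_mul_tsum_nat_add (ha : ∀ n, 0 < a n) (hb : ∀ n, 0 < b n)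
    (hf : Summable fun n => (b n : ℝ) / a n) (hr : (r : ℝ) = ∑' n, (b n : ℝ) / a n) (N : ℕ) :
    1 ≤ r.den * (∏ k ∈ range N, (a k : ℝ)) * ∑' i, (b (i + N) : ℝ) / a (i + N) := by
  have haR : ∀ n, (0 : ℝ) < a n := fun n => Int.cast_pos.2 (ha n)
  have hbR : ∀ n, (0 : ℝ) < b n := fun n => Int.cast_pos.2 (hb n)
  have hpos : 0 < r.den * (∏ k ∈ range N, (a k : ℝ)) * ∑' i, (b (i + N) : ℝ) / a (i + N) :=
    mul_pos (mul_pos (by positivity) (prod_pos fun k _ => haR k))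
      (((summable_nat_add_iff N).2 hf).tsum_pos (fun i => (div_pos (hbR _) (haR _)).le) 0
        (div_pos (hbR _) (haR _)))
  have hpartial : (∏ k ∈ range N, (a k : ℝ)) * ∑ n ∈ range N, (b n : ℝ) / a n
      = ∑ n ∈ range N, (b n : ℝ) * ∏ k ∈ (range N).erase n, (a k : ℝ) := by
    rw [mul_sum]
    refine sum_congr rfl fun n hn => ?_
    rw [← mul_prod_erase _ _ hn]
    field_simp [(haR n).ne']
  have hint : r.den * (∏ k ∈ range N, (a k : ℝ)) * ∑' i, (b (i + N) : ℝ) / a (i + N)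
      = ((r.num * ∏ k ∈ range N, a k
          - r.den * ∑ n ∈ range N, b n * ∏ k ∈ (range N).erase n, a k : ℤ) : ℝ) := by
    rw [eq_sub_of_add_eq' (hf.sum_add_tsum_nat_add N), ← hr]
    push_cast
    rw [← hpartial, Rat.cast_def]
    field_simp
  rw [hint] at hpos ⊢
  exact_mod_cast Int.cast_pos.1 hpos

lemma eventually_le_two_den_mul_prod (ha : ∀ n, 0 < a n) (hb : ∀ n, 0 < b n)
    (hf : Summable fun n => (b n : ℝ) / a n) (hr : (r : ℝ) = ∑' n, (b n : ℝ) / a n)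
    (hlim : Tendsto (fun N => (∏ k ∈ range N, (a k : ℝ)) *
      ∑' i, (b (i + (N + 1)) : ℝ) / a (i + (N + 1))) atTop (𝓝 0)) :
    ∀ᶠ N in atTop, (a N : ℝ) ≤ 2 * r.den * b N * ∏ k ∈ range N, (a k : ℝ) := by
  have hden : (0 : ℝ) < r.den := by positivity
  filter_upwards [hlim.eventually_le_const (show (0 : ℝ) < 1 / (2 * r.den) by positivity)]
    with N hN
  set P := ∏ k ∈ range N, (a k : ℝ)
  set ρ := ∑' i, (b (i + (N + 1)) : ℝ) / a (i + (N + 1))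
  have h1 := one_le_den_mul_prod_mul_tsum_nat_add ha hb hf hr N
  rw [((summable_nat_add_iff N).2 hf).tsum_eq_zero_add] at h1
  simp only [zero_add, add_assoc, add_comm 1 N] at h1
  have h2 : r.den * (P * ρ) ≤ 1 / 2 :=
    (mul_le_mul_of_nonneg_left hN hden.le).trans_eq (by field_simp)
  have h3 : 1 / 2 * (a N : ℝ) ≤ r.den * P * b N := by
    rw [← le_div_iff₀ (Int.cast_pos.2 (ha N)), mul_div_assoc]
    linarith [show r.den * P * (b N / a N + ρ) = r.den * P * (b N / a N) + r.den * (P * ρ) by ring]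
  linarith

end RationalSum

lemma tendsto_log_sub_sum_log_atBot {a b d : ℕ → ℝ} {C : ℝ} (ha : ∀ n, 0 < a n)
    (hb : ∀ n, 0 < b n) (hd : ∀ n, 0 < d n) (hC : 0 < C)
    (hab : ∀ᶠ N in atTop, a N ≤ C * b N * ∏ k ∈ range N, a k)
    (hdb : Tendsto (fun n => d n ^ 2 ^ n / b n) atTop atTop) :
    Tendsto (fun N => log (a N) - 2 ^ N * log (d N) - ∑ k ∈ range N, log (a k)) atTop atBot := by
  refine tendsto_atBot_mono' _ ?_ (tendsto_atBot_add_const_left _ (log C)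
    (tendsto_neg_atTop_atBot.comp (tendsto_log_atTop.comp hdb)))
  filter_upwards [hab] with N hN
  have h := log_le_log (ha N) hN
  rw [log_mul (mul_pos hC (hb N)).ne' (prod_pos fun k _ => ha k).ne', log_mul hC.ne' (hb N).ne',
    log_prod fun k _ => (ha k).ne'] at h
  simp only [Function.comp_apply]
  rw [log_div (pow_pos (hd N) _).ne' (hb N).ne', log_pow]
  push_cast
  linarith

lemma sum_Ico_two_pow {s N : ℕ} (hsN : s ≤ N) : ∑ k ∈ Ico s N, (2 : ℝ) ^ k = 2 ^ N - 2 ^ s := by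
  rw [geom_sum_Ico (by norm_num) hsN]
  norm_num

lemma Antitone.two_pow_sub_mul_le_sum {t : ℕ → ℝ} (ht : Antitone t) {s N : ℕ} (hsN : s ≤ N) :
    (2 ^ N - 2 ^ s) * t N ≤ ∑ k ∈ Ico s N, 2 ^ k * t (k + 1) := by
  rw [← sum_Ico_two_pow hsN, sum_mul]
  exact sum_le_sum fun k hk => mul_le_mul_of_nonneg_left (ht (mem_Ico.1 hk).2) (by positivity)

lemma two_pow_le_of_one_add_sum_le {w : ℕ → ℝ} {s M : ℕ} (hsM : s ≤ M)
    (hw : ∀ k ≥ s, 0 ≤ w k) (h : ∀ N ≥ M, 1 + ∑ k ∈ Ico s N, w k ≤ w N) (j : ℕ) :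
    2 ^ j ≤ w (M + j) := by
  have hsum : ∀ j, (2 : ℝ) ^ j ≤ 1 + ∑ k ∈ Ico s (M + j), w k := by
    intro j
    induction j with
    | zero => simpa using sum_nonneg fun k hk => hw k (mem_Ico.1 hk).1
    | succ j ih =>
      rw [← add_assoc, sum_Ico_succ_top (by omega), pow_succ]
      linarith [h (M + j) (by omega)]
  exact (hsum j).trans (h _ (by omega))

section Slack

variable {L : ℝ} {x δ : ℕ → ℝ} {s : ℕ}

lemma tsum_nat_add_eq_add_tsum_nat_add (hδ : Summable δ) (n : ℕ) :
    ∑' j, δ (n + j) = δ n + ∑' j, δ (n + 1 + j) := by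
  have : Summable fun j => δ (n + j) := by
    simpa only [add_comm] using (summable_nat_add_iff n).2 hδ
  rw [this.tsum_eq_zero_add]
  simp only [add_zero, add_right_comm n 1, add_assoc]

lemma antitone_tsum_nat_add (hδ0 : ∀ n, 0 ≤ δ n) (hδ : Summable δ) :
    Antitone fun n => ∑' j, δ (n + j) :=
  antitone_nat_of_succ_le fun n => by linarith [tsum_nat_add_eq_add_tsum_nat_add hδ n, hδ0 n]

/-- With `x = log a`, `δ = log d` and `L = log A` this is
`log (A ^ 2ⁿ / (aₙ · (∏_{j > n} dⱼ) ^ 2ⁿ))`. -/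
noncomputable def slack (L : ℝ) (x δ : ℕ → ℝ) (n : ℕ) : ℝ :=
  L * 2 ^ n - x n - 2 ^ n * ∑' j, δ (n + 1 + j)

lemma slack_nonneg (hδ0 : ∀ n, 0 ≤ δ n) (hδ : Summable δ)
    (hxs : ∀ n ≥ s, x n / 2 ^ n + ∑' j, δ (n + j) < L) {k : ℕ} (hk : s ≤ k) :
    0 ≤ slack L x δ k := by
  have hxk : x k < (L - ∑' j, δ (k + j)) * 2 ^ k :=
    (div_lt_iff₀ (by positivity)).1 (lt_sub_iff_add_lt.2 (hxs k hk))
  have ht : 2 ^ k * ∑' j, δ (k + 1 + j) ≤ 2 ^ k * ∑' j, δ (k + j) :=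
    mul_le_mul_of_nonneg_left (antitone_tsum_nat_add hδ0 hδ (Nat.le_succ k)) (by positivity)
  rw [slack]
  linarith

lemma eventually_one_add_sum_le_slack (hδ0 : ∀ n, 0 ≤ δ n) (hδ : Summable δ)
    (hbot : Tendsto (fun n => x n - 2 ^ n * δ n - ∑ k ∈ range n, x k) atTop atBot) :
    ∀ᶠ N in atTop, 1 + ∑ k ∈ Ico s N, slack L x δ k ≤ slack L x δ N := by
  set t : ℕ → ℝ := fun n => ∑' j, δ (n + j) with ht_def
  have ht : Antitone t := antitone_tsum_nat_add hδ0 hδ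
  have hslack : ∀ n, slack L x δ n = L * 2 ^ n - x n - 2 ^ n * t (n + 1) := fun n => rfl
  filter_upwards [hbot.eventually_le_atBot (L * 2 ^ s - 2 ^ s * t 0 - ∑ k ∈ range s, x k - 1),
    eventually_ge_atTop s] with N hN hsN
  have hx_sum : ∑ k ∈ range N, x k = ∑ k ∈ range s, x k + (L * (2 ^ N - 2 ^ s)
      - ∑ k ∈ Ico s N, slack L x δ k - ∑ k ∈ Ico s N, 2 ^ k * t (k + 1)) := by
    rw [← sum_range_add_sum_Ico _ hsN, ← sum_Ico_two_pow hsN, mul_sum, ← sum_sub_distrib,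
      ← sum_sub_distrib]
    exact congrArg _ (sum_congr rfl fun k _ => by rw [hslack]; ring)
  have hS := ht.two_pow_sub_mul_le_sum hsN
  have ht0 : 2 ^ s * t N ≤ 2 ^ s * t 0 := by gcongr; exact ht (Nat.zero_le N)
  have htN : 2 ^ N * t N = 2 ^ N * δ N + 2 ^ N * t (N + 1) := by
    rw [show t N = δ N + t (N + 1) from tsum_nat_add_eq_add_tsum_nat_add hδ N]
    ring
  rw [hslack N]
  linarith

lemma tendsto_slack_div_two_pow (hx : Tendsto (fun n => x n / 2 ^ n) atTop (𝓝 L)) :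
    Tendsto (fun n => slack L x δ n / 2 ^ n) atTop (𝓝 0) := by
  have ht : Tendsto (fun n => ∑' j, δ (n + 1 + j)) atTop (𝓝 0) := by
    simpa only [add_comm] using (tendsto_add_atTop_iff_nat 1).2 (tendsto_sum_nat_add δ)
  convert ((tendsto_const_nhds (x := L)).sub hx).sub ht using 1
  · ext n
    rw [slack]
    field_simp
  · simp

theorem not_tendsto_sub_sum_atBot (hδ0 : ∀ n, 0 ≤ δ n) (hδ : Summable δ)
    (hx : Tendsto (fun n => x n / 2 ^ n) atTop (𝓝 L))
    (hxs : ∀ n ≥ s, x n / 2 ^ n + ∑' j, δ (n + j) < L) :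
    ¬ Tendsto (fun n => x n - 2 ^ n * δ n - ∑ k ∈ range n, x k) atTop atBot := by
  intro hbot
  obtain ⟨M, hM⟩ := ((eventually_one_add_sum_le_slack (s := s) (L := L) hδ0 hδ hbot).and
    (eventually_ge_atTop s)).exists_forall_of_atTop
  have hge : ∀ j, 1 / 2 ^ M ≤ slack L x δ (j + M) / 2 ^ (j + M) := fun j => by
    rw [add_comm, le_div_iff₀ (by positivity), pow_add, one_div_mul_eq_div,
      mul_div_cancel_left₀ _ (by positivity)]
    exact two_pow_le_of_one_add_sum_le (hM M le_rfl).2 (fun k hk => slack_nonneg hδ0 hδ hxs hk)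
      (fun N hN => (hM N hN).1) j
  have := ge_of_tendsto ((tendsto_add_atTop_iff_nat M).2 (tendsto_slack_div_two_pow hx))
    (Eventually.of_forall hge)
  exact absurd this (not_le.2 (by positivity))

end Slack

lemma log_div_two_pow_add_tsum_lt {A : ℝ} {a d : ℕ → ℝ} {n : ℕ} (hA : 0 < A) (ha : 0 < a n)
    (hd : ∀ n, 0 < d n) (hδ : Summable fun n => log (d n))
    (h : ∏' j, d (n + j) < A / a n ^ ((1 : ℝ) / 2 ^ n)) :
    log (a n) / 2 ^ n + ∑' j, log (d (n + j)) < log A := by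
  rw [← rexp_tsum_eq_tprod (fun j => hd _) (hδ.comp_injective (add_right_injective n))] at h
  replace h := log_lt_log (exp_pos _) h
  rw [log_exp, log_div hA.ne' (rpow_pos_of_pos ha _).ne', log_rpow ha, one_div_mul_eq_div] at h
  linarith

lemma le_pow_two_pow_of_log_div_lt {A y : ℝ} {n : ℕ} (hA : 0 < A) (hy : 0 < y)
    (h : log y / 2 ^ n < log A) : y ≤ A ^ 2 ^ n := by
  have hpow : log (A ^ 2 ^ n) = 2 ^ n * log A := by rw [log_pow]; push_cast; rfl
  rw [div_lt_iff₀ (by positivity), mul_comm, ← hpow] at h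
  exact ((log_lt_log_iff hy (by positivity)).1 h).le

theorem Hancl3_general (A : ℝ) (d : ℕ → ℝ) (a b : ℕ → ℤ) (s : ℕ)
    (hA : 1 < A) (hd : ∀ n, 1 < d n) (hdprod : Multipliable d)
    (ha : ∀ n, 0 < a n) (hb : ∀ n, 0 < b n)
    (assu1 : Tendsto (fun n => (a n : ℝ) ^ ((1 : ℝ) / 2 ^ n)) atTop (nhds A))
    (assu2 : ∀ n ≥ s, (∏' j : ℕ, d (n + j)) < A / (a n : ℝ) ^ ((1 : ℝ) / 2 ^ n))
    (assu3 : Tendsto (fun n => d n ^ (2 ^ n : ℕ) / (b n : ℝ)) atTop atTop) :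
    Irrational (∑' n : ℕ, (b n : ℝ) / (a n : ℝ)) := by
  have hA0 : 0 < A := one_pos.trans hA
  have haR : ∀ n, (0 : ℝ) < a n := fun n => Int.cast_pos.2 (ha n)
  have hbR : ∀ n, (0 : ℝ) < b n := fun n => Int.cast_pos.2 (hb n)
  have hdpos : ∀ n, 0 < d n := fun n => one_pos.trans (hd n)
  have hδ0 : ∀ n, 0 ≤ log (d n) := fun n => log_nonneg (hd n).le
  have hδ := Real.summable_log_of_multipliable (fun n => (hd n).le) hdprod
  have hx : Tendsto (fun n => log (a n) / 2 ^ n) atTop (𝓝 (log A)) := by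
    simpa only [log_rpow (haR _), one_div_mul_eq_div] using assu1.log hA0.ne'
  have hxs : ∀ n ≥ s, log (a n) / 2 ^ n + ∑' j, log (d (n + j)) < log A := fun n hn =>
    log_div_two_pow_add_tsum_lt (a := fun n => (a n : ℝ)) hA0 (haR n) hdpos hδ (assu2 n hn)
  have has : ∀ n ≥ s, (a n : ℝ) ≤ A ^ 2 ^ n := fun n hn => le_pow_two_pow_of_log_div_lt hA0
    (haR n) ((hxs n hn).trans_le' (le_add_of_nonneg_right (tsum_nonneg fun j => hδ0 _)))
  have hd1 : Tendsto d atTop (𝓝 1) := by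
    simpa [exp_log (hdpos _)] using hδ.tendsto_atTop_zero.rexp
  obtain ⟨β, hβ0, hβ1, hAβ, hβ⟩ := exists_div_le_pow_two_pow hA haR hbR hd1 assu1 assu3
  obtain ⟨M, hM⟩ := eventually_atTop.1 hβ
  have hf0 : ∀ n, 0 ≤ (b n : ℝ) / a n := fun n => (div_pos (hbR n) (haR n)).le
  have hsum : Summable fun n => (b n : ℝ) / a n :=
    (summable_nat_add_iff M).1 (summable_nat_add_of_le_pow_two_pow hβ0 hβ1 hf0 hM)
  rintro ⟨r, hr⟩
  refine not_tendsto_sub_sum_atBot hδ0 hδ hx hxs (tendsto_log_sub_sum_log_atBot haR hbR hdpos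
    (by positivity : (0 : ℝ) < 2 * r.den) ?_ assu3)
  exact eventually_le_two_den_mul_prod ha hb hsum hr
    (tendsto_prod_mul_tsum_nat_add_succ hA.le (fun k => (haR k).le) has hβ0 hAβ hf0 hM)

theorem Hancl3 (A : ℝ) (d : ℕ → ℝ) (a b : ℕ → ℤ) (s : ℕ)
    (hA : 1 < A) (hd : ∀ n, 1 < d n) (hdprod : Multipliable d)
    (ha : ∀ n, 0 < a n) (hb : ∀ n, 0 < b n) (hs : 0 < s)
    (assu1 : Tendsto (fun n => (a n : ℝ) ^ ((1 : ℝ) / 2 ^ n)) atTop (nhds A))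
    (assu2 : ∀ n ≥ s, (∏' j : ℕ, d (n + j)) < A / (a n : ℝ) ^ ((1 : ℝ) / 2 ^ n))
    (assu3 : Tendsto (fun n => d n ^ (2 ^ n : ℕ) / (b n : ℝ)) atTop atTop) :
    Irrational (∑' n : ℕ, (b n : ℝ) / (a n : ℝ)) :=
  Hancl3_general A d a b s hA hd hdprod ha hb assu1 assu2 assu3
end

section
/- Let A > 1 be real and let {a_n}, {b_n} be sequences of positive integers with lim_{n→∞} a_n^{1/2^n} = A. If for all n ≥ 6 one has a_n^{1/2^n}·(1 + 4·(2/3)^n) ≤ A and b_n ≤ 2^{(4/3)^{n-1}}, then ∑_{n=1}^∞ b_n/a_n is irrational. -/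
/-!
If the sum were `p / q`, then for every `N` the number `q * (∏_{k<N} a k) * ∑_{n≥N} b n / a n`
would be a positive integer; we find an `N` for which it is less than `1`.

Write `log a n = 2 ^ n * L - c n` with `L = log A`. The hypotheses give `c n = o(2 ^ n)`,
`c n ≥ 2 * (4/3) ^ n` and `log b n ≤ (4/3) ^ n`. The partial sums `S N = ∑_{k<N} c k` are again
`o(2 ^ N)`, while `S N - 3 * (4/3) ^ N → ∞`; a positive sequence that is `o(2 ^ N)` cannot double
at every step, and a failure of doubling of `S N - 3 * (4/3) ^ N` means
`c N < S N - 2 * (4/3) ^ N`. As `log (∏_{k<N} a k) = (2 ^ N - 1) * L - S N`, for such `N` the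
term `b N / a N` is small against `1 / (q * ∏_{k<N} a k)`, and the later terms are smaller still
because `c n = o(2 ^ n)` is negligible against the gap `(2 ^ n - 2 ^ N) * L`.
-/

open Filter Finset Asymptotics Real

theorem isLittleO_sum_range_pow {c : ℕ → ℝ} {r : ℝ} (hr : 1 < r)
    (hc : c =o[atTop] fun n => r ^ n) :
    (fun n => ∑ k ∈ range n, c k) =o[atTop] fun n => r ^ n := by
  have hr0 : 0 < r := zero_lt_one.trans hr
  refine (hc.sum_range (fun n => (pow_pos hr0 n).le) ?_).trans_isBigO ?_
  · refine tendsto_atTop_mono (fun n => ?_) tendsto_natCast_atTop_atTop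
    simpa using Finset.sum_le_sum fun k (_ : k ∈ range n) => one_le_pow₀ (M₀ := ℝ) hr.le
  · refine IsBigO.of_bound (r - 1)⁻¹ (Eventually.of_forall fun n => ?_)
    have hsum := geom_sum_eq hr.ne' n
    rw [Real.norm_of_nonneg (by positivity), Real.norm_of_nonneg (by positivity), hsum,
      div_eq_inv_mul]
    exact mul_le_mul_of_nonneg_left (by linarith) (inv_nonneg.2 (by linarith))

theorem exists_lt_two_mul_of_isLittleO {u : ℕ → ℝ} (hu : u =o[atTop] fun n => (2 : ℝ) ^ n)
    {M : ℕ} (hM : 0 < u M) : ∃ N ≥ M, u (N + 1) < 2 * u N := by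
  by_contra! hdouble
  set ε := u M / 2 ^ M with hε
  have hε0 : 0 < ε := by positivity
  have hgrow : ∀ N ≥ M, 2 ^ N * ε ≤ u N := by
    intro N hN
    induction N, hN using Nat.le_induction with
    | base => rw [hε, mul_div_cancel₀ _ (by positivity)]
    | succ N hN ih => rw [pow_succ]; linarith [hdouble N hN]
  obtain ⟨N, hbound, hNM⟩ :=
    ((hu.def (half_pos hε0)).and (eventually_ge_atTop M)).exists
  have h2N : (0 : ℝ) < 2 ^ N := by positivity
  rw [norm_of_nonneg h2N.le, Real.norm_eq_abs] at hbound
  nlinarith [(le_abs_self _).trans hbound, hgrow N hNM]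

section Defect

variable {c : ℕ → ℝ} {θ κ C : ℝ}

theorem tendsto_sum_range_sub_pow_atTop (hθ : 1 < θ) (hC : C * (θ - 1) < κ)
    (hc : ∀ᶠ n in atTop, κ * θ ^ n ≤ c n) :
    Tendsto (fun N => ∑ k ∈ range N, c k - C * θ ^ N) atTop atTop := by
  obtain ⟨m, hm⟩ := eventually_atTop.1 hc
  set w : ℕ → ℝ := fun N => (θ - 1) * ∑ k ∈ range N, c k - κ * θ ^ N
  have hw : ∀ N ≥ m, w m ≤ w N := by
    intro N hN
    induction N, hN using Nat.le_induction with
    | base => rfl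
    | succ N hN ih =>
      have : (θ - 1) * (κ * θ ^ N) ≤ (θ - 1) * c N :=
        mul_le_mul_of_nonneg_left (hm N hN) (by linarith)
      simp only [w, sum_range_succ, pow_succ] at ih ⊢
      linarith
  have hlin : Tendsto (fun N => w m + (κ - C * (θ - 1)) * θ ^ N) atTop atTop :=
    tendsto_atTop_add_const_left _ _
      ((tendsto_pow_atTop_atTop_of_one_lt hθ).const_mul_atTop (by linarith))
  refine tendsto_atTop_mono' _ ?_ (hlin.atTop_div_const (sub_pos.2 hθ))
  filter_upwards [eventually_ge_atTop m] with N hN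
  have := hw N hN
  simp only [w] at this
  rw [div_le_iff₀ (sub_pos.2 hθ)]
  linarith

theorem frequently_lt_sum_range_sub (hθ : 1 < θ) (hθ₂ : θ < 2) (hC : C * (θ - 1) < κ)
    (hc : c =o[atTop] fun n => (2 : ℝ) ^ n) (hlow : ∀ᶠ n in atTop, κ * θ ^ n ≤ c n) :
    ∃ᶠ N in atTop, c N < ∑ k ∈ range N, c k - (2 - θ) * C * θ ^ N := by
  set u : ℕ → ℝ := fun N => ∑ k ∈ range N, c k - C * θ ^ N
  have hu : u =o[atTop] fun n => (2 : ℝ) ^ n :=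
    (isLittleO_sum_range_pow one_lt_two hc).sub
      ((isLittleO_pow_pow_of_lt_left (by linarith) hθ₂).const_mul_left C)
  refine frequently_atTop.2 fun M₀ => ?_
  obtain ⟨M, hMpos, hM⟩ :=
    (((tendsto_sum_range_sub_pow_atTop hθ hC hlow).eventually_gt_atTop 0).and
      (eventually_ge_atTop M₀)).exists
  obtain ⟨N, hN, hlt⟩ := exists_lt_two_mul_of_isLittleO hu hMpos
  refine ⟨N, hM.trans hN, ?_⟩
  simp only [u, sum_range_succ, pow_succ] at hlt
  linarith

end Defect

theorem exists_add_sum_range_sub_le {ℓ β : ℕ → ℝ} {L : ℝ} (hL : 0 < L)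
    (hc : (fun n => 2 ^ n * L - ℓ n) =o[atTop] fun n => (2 : ℝ) ^ n)
    (hlow : ∀ᶠ n in atTop, 2 * (4 / 3 : ℝ) ^ n ≤ 2 ^ n * L - ℓ n)
    (hβ : ∀ᶠ n in atTop, β n ≤ (4 / 3 : ℝ) ^ n) (Q : ℝ) :
    ∃ N, ∀ n, Q + ∑ k ∈ range N, ℓ k + (β (n + N) - ℓ (n + N)) ≤ -((n + 2 : ℕ) * log 2) := by
  set c : ℕ → ℝ := fun n => 2 ^ n * L - ℓ n with hc_def
  have hfreq : ∃ᶠ N in atTop, c N < ∑ k ∈ range N, c k - 2 * (4 / 3 : ℝ) ^ N := by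
    convert frequently_lt_sum_range_sub (C := 3) (by norm_num) (by norm_num) (by norm_num) hc hlow
      using 3
    ring
  have hsum_nonneg : ∀ᶠ N in atTop, 0 ≤ ∑ k ∈ range N, c k := by
    refine ((tendsto_sum_range_sub_pow_atTop (C := 0) (by norm_num : (1 : ℝ) < 4 / 3)
      (by norm_num) hlow).eventually_ge_atTop 0).mono fun N hN => ?_
    rwa [zero_mul, sub_zero] at hN
  have hQ : ∀ᶠ N in atTop, Q + 2 * log 2 ≤ (4 / 3 : ℝ) ^ N :=
    (tendsto_pow_atTop_atTop_of_one_lt (by norm_num)).eventually_ge_atTop _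
  have hfar : ∀ᶠ n in atTop, Q + β n + c n + (n + 2) * log 2 ≤ L / 2 * 2 ^ n := by
    have ho : (fun n : ℕ => (Q + 2 * log 2) + (4 / 3 : ℝ) ^ n + c n + log 2 * n)
        =o[atTop] fun n => (2 : ℝ) ^ n :=
      (((isLittleO_const_left.2 <| Or.inr <| tendsto_norm_atTop_atTop.comp <|
        tendsto_pow_atTop_atTop_of_one_lt one_lt_two).add
        (isLittleO_pow_pow_of_lt_left (by norm_num) (by norm_num))).add hc).add
        ((isLittleO_coe_const_pow_of_one_lt one_lt_two).const_mul_left _)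
    filter_upwards [ho.def (half_pos hL), hβ] with n hn hβn
    rw [norm_of_nonneg (by positivity : (0 : ℝ) ≤ 2 ^ n), Real.norm_eq_abs] at hn
    linarith [(le_abs_self _).trans hn]
  obtain ⟨N, hcN, hSN, hQN, hβN, hfarN⟩ := (hfreq.and_eventually
    (hsum_nonneg.and (hQ.and (hβ.and (eventually_forall_ge_atTop.2 hfar))))).exists
  have hsum_ℓ : ∑ k ∈ range N, ℓ k = (2 ^ N - 1) * L - ∑ k ∈ range N, c k := by
    simp only [hc_def, sum_sub_distrib, ← sum_mul, geom_sum_eq (by norm_num : (2 : ℝ) ≠ 1)]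
    ring
  have hlog2 : 0 < log 2 := log_pos one_lt_two
  refine ⟨N, fun n => ?_⟩
  rw [hsum_ℓ]
  push_cast
  rcases n with _ | m
  · simp only [hc_def, zero_add] at hcN ⊢
    push_cast
    linarith
  · have hfar_n := hfarN (m + 1 + N) (by omega)
    have hgap : 2 ^ (N + 1) * L ≤ 2 ^ (m + 1 + N) * L :=
      mul_le_mul_of_nonneg_right (pow_le_pow_right₀ one_le_two (by omega)) hL.le
    have hidx : ((m : ℝ) + 1 + 2) * log 2 ≤ ((m : ℝ) + 1 + N + 2) * log 2 :=
      mul_le_mul_of_nonneg_right (by linarith [(N.cast_nonneg : (0 : ℝ) ≤ N)]) hlog2.le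
    simp only [hc_def] at hfar_n
    rw [pow_succ] at hgap
    push_cast at hfar_n ⊢
    linarith

theorem exists_int_prod_mul_sum_div {a b : ℕ → ℤ} (ha : ∀ n, a n ≠ 0) (N : ℕ) :
    ∃ z : ℤ, (∏ k ∈ range N, (a k : ℝ)) * ∑ k ∈ range N, (b k : ℝ) / a k = z := by
  induction N with
  | zero => exact ⟨0, by simp⟩
  | succ N ih =>
    obtain ⟨z, hz⟩ := ih
    refine ⟨a N * z + b N * ∏ k ∈ range N, a k, ?_⟩
    have haN : (a N : ℝ) ≠ 0 := Int.cast_ne_zero.2 (ha N)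
    rw [prod_range_succ, sum_range_succ]
    push_cast
    rw [← hz]
    field_simp

theorem irrational_tsum_div_of_forall_exists_lt_one {a b : ℕ → ℤ} (ha : ∀ n, 0 < a n)
    (hb : ∀ n, 0 < b n) (hs : Summable fun n => (b n : ℝ) / a n)
    (h : ∀ q : ℕ, 0 < q →
      ∃ N, q * (∏ k ∈ range N, (a k : ℝ)) * ∑' n, (b (n + N) : ℝ) / a (n + N) < 1) :
    Irrational (∑' n, (b n : ℝ) / a n) := by
  rintro ⟨r, hr⟩
  obtain ⟨N, hN⟩ := h r.den r.pos
  obtain ⟨z, hz⟩ := exists_int_prod_mul_sum_div (b := b) (fun n => (ha n).ne') N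
  have hterm_pos : ∀ n, 0 < (b n : ℝ) / a n :=
    fun n => div_pos (Int.cast_pos.2 (hb n)) (Int.cast_pos.2 (ha n))
  have htail_pos : 0 < ∑' n, (b (n + N) : ℝ) / a (n + N) :=
    ((summable_nat_add_iff N).2 hs).tsum_pos (fun n => (hterm_pos _).le) 0 (hterm_pos _)
  set m : ℤ := r.num * ∏ k ∈ range N, a k - r.den * z
  have hm : (m : ℝ) = r.den * (∏ k ∈ range N, (a k : ℝ)) * ∑' n, (b (n + N) : ℝ) / a (n + N) := by
    have hnum : (r.den : ℝ) * r = r.num := by exact_mod_cast Rat.den_mul_eq_num r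
    simp only [m]
    push_cast
    rw [← hnum, hr, ← hz, ← hs.sum_add_tsum_nat_add N]
    ring
  have hm_pos : 0 < m := by
    have : (0 : ℝ) < m := hm ▸ mul_pos (mul_pos (Nat.cast_pos.2 r.pos)
      (prod_pos fun k _ => Int.cast_pos.2 (ha k))) htail_pos
    exact_mod_cast this
  have hm_lt : m < 1 := by exact_mod_cast hm ▸ hN
  omega

section TailBound

variable {f : ℕ → ℝ} {C : ℝ} {N : ℕ}

theorem summable_of_mul_nat_add_le_half_pow (hC : 0 < C)
    (h : ∀ n, C * f (n + N) ≤ (1 / 2) ^ (n + 2)) (hf : ∀ n, 0 ≤ f n) : Summable f := by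
  refine (summable_nat_add_iff N).1 (Summable.of_nonneg_of_le (fun n => hf _)
    (fun n => (le_div_iff₀' hC).2 (h n)) ?_)
  exact ((summable_geometric_two.mul_right ((1 / 2) ^ 2)).div_const C).congr fun n => by
    rw [pow_add]

theorem mul_tsum_nat_add_lt_one (hC : 0 < C)
    (h : ∀ n, C * f (n + N) ≤ (1 / 2) ^ (n + 2)) (hf : ∀ n, 0 ≤ f n) :
    C * ∑' n, f (n + N) < 1 := by
  have hs := (summable_nat_add_iff N).2 (summable_of_mul_nat_add_le_half_pow hC h hf)
  calc C * ∑' n, f (n + N) = ∑' n, C * f (n + N) := tsum_mul_left.symm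
    _ ≤ ∑' n : ℕ, (1 / 2 : ℝ) ^ (n + 2) :=
      (hs.mul_left C).tsum_le_tsum h (summable_geometric_two.mul_right _ |>.congr
        fun n => (pow_add _ _ _).symm)
    _ < 1 := by
      simp only [pow_add, tsum_mul_right, tsum_geometric_two]
      norm_num

end TailBound

theorem isLittleO_two_pow_mul_log_sub_log {x : ℕ → ℝ} (hx : ∀ n, 0 < x n) {A : ℝ} (hA : 0 < A)
    (h : Tendsto (fun n => x n ^ ((1 : ℝ) / 2 ^ n)) atTop (nhds A)) :
    (fun n => 2 ^ n * log A - log (x n)) =o[atTop] fun n => (2 : ℝ) ^ n := by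
  rw [isLittleO_iff_tendsto fun n hn => absurd hn (by positivity)]
  have := (h.log hA.ne').const_sub (log A)
  rw [sub_self] at this
  refine this.congr fun n => ?_
  rw [log_rpow (hx n)]
  field_simp

theorem two_mul_four_div_three_pow_le {x A : ℝ} (hx : 0 < x) {n : ℕ} (hn : 2 ≤ n)
    (h : x ^ ((1 : ℝ) / 2 ^ n) * (1 + 4 * (2 / 3) ^ n) ≤ A) :
    2 * (4 / 3 : ℝ) ^ n ≤ 2 ^ n * log A - log x := by
  set e : ℝ := 4 * (2 / 3) ^ n
  have he : e ≤ 2 := by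
    have : (2 / 3 : ℝ) ^ n ≤ (2 / 3) ^ 2 := pow_le_pow_of_le_one (by norm_num) (by norm_num) hn
    linarith
  have he0 : 0 ≤ e := by positivity
  have hlog_e : e / 2 ≤ log (1 + e) := by
    refine le_trans ?_ (le_log_one_add_of_nonneg he0)
    rw [div_le_div_iff₀ two_pos (by linarith)]
    nlinarith
  have hlog := log_le_log (by positivity) h
  rw [log_mul (by positivity) (by positivity), log_rpow hx] at hlog
  have hpow : 2 * (4 / 3 : ℝ) ^ n = 2 ^ n * (e / 2) := by
    have : (4 / 3 : ℝ) ^ n = 2 ^ n * (2 / 3) ^ n := by rw [← mul_pow]; norm_num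
    rw [this]; ring
  calc 2 * (4 / 3 : ℝ) ^ n = 2 ^ n * (e / 2) := hpow
    _ ≤ 2 ^ n * (log A - 1 / 2 ^ n * log x) :=
      mul_le_mul_of_nonneg_left (by linarith) (by positivity)
    _ = 2 ^ n * log A - log x := by field_simp

theorem log_le_four_div_three_pow {y : ℝ} (hy : 0 < y) {n : ℕ}
    (h : y ≤ 2 ^ ((4 / 3 : ℝ) ^ (n - 1))) : log y ≤ (4 / 3 : ℝ) ^ n := by
  have hlog := log_le_log hy h
  rw [log_rpow two_pos] at hlog
  have hpow : (4 / 3 : ℝ) ^ (n - 1) ≤ (4 / 3) ^ n := pow_le_pow_right₀ (by norm_num) (n.sub_le 1)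
  have hlog2 : log 2 ≤ 1 := (log_two_lt_d9.trans (by norm_num)).le
  calc log y ≤ (4 / 3 : ℝ) ^ (n - 1) * log 2 := hlog
    _ ≤ (4 / 3) ^ n * 1 := mul_le_mul hpow hlog2 (log_nonneg one_le_two) (by positivity)
    _ = (4 / 3) ^ n := mul_one _

theorem exists_forall_mul_prod_mul_div_le {x y : ℕ → ℝ} (hx : ∀ n, 0 < x n) (hy : ∀ n, 0 < y n)
    {L : ℝ} (hL : 0 < L) (hc : (fun n => 2 ^ n * L - log (x n)) =o[atTop] fun n => (2 : ℝ) ^ n)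
    (hlow : ∀ᶠ n in atTop, 2 * (4 / 3 : ℝ) ^ n ≤ 2 ^ n * L - log (x n))
    (hy' : ∀ᶠ n in atTop, log (y n) ≤ (4 / 3 : ℝ) ^ n) {q : ℝ} (hq : 0 < q) :
    ∃ N, ∀ n, q * (∏ k ∈ range N, x k) * (y (n + N) / x (n + N)) ≤ (1 / 2) ^ (n + 2) := by
  obtain ⟨N, hN⟩ := exists_add_sum_range_sub_le hL hc hlow hy' (log q)
  refine ⟨N, fun n => ?_⟩
  have := exp_le_exp.2 (hN n)
  rwa [exp_add, exp_add, exp_sub, exp_log hq, exp_log (hy _), exp_log (hx _), exp_sum,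
    prod_congr rfl fun k _ => exp_log (hx k), exp_neg, exp_nat_mul, exp_log two_pos, ← inv_pow,
    ← one_div] at this

theorem Hancl3corollary (A : ℝ) (a b : ℕ → ℤ)
    (hA : 1 < A) (ha : ∀ n, 0 < a n) (hb : ∀ n, 0 < b n)
    (assu1 : Tendsto (fun n => (a n : ℝ) ^ ((1 : ℝ) / 2 ^ n)) atTop (nhds A))
    (h : ∀ n ≥ 6, (a n : ℝ) ^ ((1 : ℝ) / 2 ^ n) * (1 + 4 * (2 / 3 : ℝ) ^ n) ≤ A ∧
      (b n : ℝ) ≤ (2 : ℝ) ^ ((4 / 3 : ℝ) ^ (n - 1))) :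
    Irrational (∑' n : ℕ, (b n : ℝ) / (a n : ℝ)) := by
  have haR : ∀ n, (0 : ℝ) < a n := fun n => Int.cast_pos.2 (ha n)
  have hbR : ∀ n, (0 : ℝ) < b n := fun n => Int.cast_pos.2 (hb n)
  have hterm : ∀ n, 0 ≤ (b n : ℝ) / a n := fun n => (div_pos (hbR n) (haR n)).le
  have hbound : ∀ q : ℝ, 0 < q → ∃ N, ∀ n,
      q * (∏ k ∈ range N, (a k : ℝ)) * ((b (n + N) : ℝ) / a (n + N)) ≤ (1 / 2) ^ (n + 2) :=
    fun q hq => exists_forall_mul_prod_mul_div_le haR hbR (log_pos hA)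
      (isLittleO_two_pow_mul_log_sub_log haR (zero_lt_one.trans hA) assu1)
      (eventually_atTop.2
        ⟨6, fun n hn => two_mul_four_div_three_pow_le (haR n) (by omega) (h n hn).1⟩)
      (eventually_atTop.2 ⟨6, fun n hn => log_le_four_div_three_pow (hbR n) (h n hn).2⟩)
      hq
  have hpos : ∀ q : ℝ, 0 < q → ∀ N, 0 < q * ∏ k ∈ range N, (a k : ℝ) :=
    fun q hq N => mul_pos hq (prod_pos fun k _ => haR k)
  obtain ⟨N₁, hN₁⟩ := hbound 1 one_pos
  refine irrational_tsum_div_of_forall_exists_lt_one ha hb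
    (summable_of_mul_nat_add_le_half_pow (hpos 1 one_pos N₁) hN₁ hterm) fun q hq => ?_
  obtain ⟨N, hN⟩ := hbound q (Nat.cast_pos.2 hq)
  exact ⟨N, mul_tsum_nat_add_lt_one (hpos q (Nat.cast_pos.2 hq) N) hN hterm⟩
end

section
/- Assume Roth's theorem: for every algebraic irrational real ξ and real κ, if there are infinitely many pairs of coprime integers (p,q) with q > 0 and |ξ − p/q| < 1/q^κ, then κ ≤ 2. Let δ > 0 and let {a_n}, {b_n} be sequences of positive integers with limsup_{n→∞} a_{n+1} / ((∏_{i=1}^n a_i)^{2+δ} · b_{n+1}) = ∞ and liminf_{n→∞} (a_{n+1}/a_n)·(b_n/b_{n+1}) > 1. Then ∑_{n=1}^∞ b_n/a_n is transcendental. -/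
/-!
Write `α = ∑ bₙ/aₙ` and let `Sₖ` be its partial sums; `Sₖ` is a rational with denominator at most
`Qₖ = a₀ ⋯ aₖ`. The liminf condition makes the terms decay geometrically from some point on, so the
tail `α - Sₖ` is comparable to its first term `bₖ₊₁/aₖ₊₁`, and the limsup condition makes that
term smaller than `ε / Qₖ^(2+δ)` for infinitely many `k`, for every `ε > 0`. The `Sₖ` are pairwise
distinct and never equal to `α`. A rational `α = u/v` admits no such approximations, since
`|u/v - p/q| ≥ 1/(vq)` whenever the two differ; an algebraic irrational `α` admits none either,
by Roth's theorem with exponent `2 + δ`.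
-/

open Filter Finset

def RothTheorem : Prop :=
  ∀ ξ κ : ℝ, IsAlgebraic ℚ ξ → Irrational ξ →
    {pq : ℤ × ℤ | 0 < pq.2 ∧ IsCoprime pq.1 pq.2 ∧
      |ξ - (pq.1 : ℝ) / (pq.2 : ℝ)| < 1 / (pq.2 : ℝ) ^ κ}.Infinite → κ ≤ 2

theorem RothTheorem.le_two_of_infinite (hRoth : RothTheorem) {ξ κ : ℝ}
    (halg : IsAlgebraic ℚ ξ) (hirr : Irrational ξ)
    (hinf : {s : ℚ | |ξ - s| < 1 / (s.den : ℝ) ^ κ}.Infinite) : κ ≤ 2 := by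
  have hinj : Function.Injective fun s : ℚ => (s.num, (s.den : ℤ)) := fun s t hst => by
    simp only [Prod.mk.injEq, Nat.cast_inj] at hst
    exact Rat.ext hst.1 hst.2
  refine hRoth ξ κ halg hirr <| (hinf.image hinj.injOn).mono ?_
  rintro _ ⟨s, hs, rfl⟩
  refine ⟨by simp [s.den_pos], s.isCoprime_num_den, ?_⟩
  simpa [Rat.cast_def] using hs

theorem Rat.one_div_den_mul_den_le_abs_sub {r s : ℚ} (h : r ≠ s) :
    1 / ((r.den : ℝ) * s.den) ≤ |(r : ℝ) - s| := by
  have hden : (0 : ℝ) < r.den * s.den := by positivity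
  set n : ℤ := r.num * s.den - s.num * r.den
  have hn : ((r : ℝ) - s) * (r.den * s.den) = n := by
    rw [Rat.cast_def r, Rat.cast_def s]
    push_cast [n]
    field_simp
  have hn0 : n ≠ 0 := by
    rintro h0
    rw [h0, Int.cast_zero, mul_eq_zero, sub_eq_zero, Rat.cast_inj] at hn
    exact hn.elim h (ne_of_gt hden)
  rw [div_le_iff₀ hden, ← abs_of_pos hden, ← abs_mul, hn]
  exact_mod_cast Int.one_le_abs hn0

theorem transcendental_of_frequently_abs_sub_lt (hRoth : RothTheorem) {ξ κ : ℝ} (hκ : 2 < κ)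
    {r : ℕ → ℚ} (hr : Function.Injective r)
    (h : ∀ ε > 0, ∃ᶠ k in atTop, (r k : ℝ) ≠ ξ ∧ |ξ - r k| < ε / ((r k).den : ℝ) ^ κ) :
    Transcendental ℚ ξ := by
  intro halg
  by_cases hirr : Irrational ξ
  · have hinf : {s : ℚ | |ξ - s| < 1 / (s.den : ℝ) ^ κ}.Infinite :=
      ((Nat.frequently_atTop_iff_infinite.mp (h 1 one_pos)).image hr.injOn).mono <| by
        rintro _ ⟨k, ⟨_, hk⟩, rfl⟩
        exact hk
    linarith [hRoth.le_two_of_infinite halg hirr hinf]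
  · obtain ⟨s, rfl⟩ : ξ ∈ Set.range ((↑) : ℚ → ℝ) := not_not.mp hirr
    obtain ⟨k, hne, hlt⟩ := (h (1 / s.den) (by positivity)).exists
    set d : ℝ := ((r k).den : ℝ)
    have hd : 1 ≤ d := by simp [d, Nat.one_le_iff_ne_zero]
    have hlow := Rat.one_div_den_mul_den_le_abs_sub (Ne.symm (Rat.cast_injective.ne_iff.mp hne))
    have hdκ : d ≤ d ^ κ := Real.self_le_rpow_of_one_le hd (by linarith)
    refine lt_irrefl (1 / (s.den * d)) ?_
    calc 1 / (s.den * d) ≤ |(s : ℝ) - r k| := hlow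
      _ < 1 / s.den / d ^ κ := hlt
      _ ≤ 1 / (s.den * d) := by
        rw [div_div]
        gcongr

theorem Rat.den_intCast_div_le {m n : ℤ} (hn : 0 < n) : (((m : ℚ) / n).den : ℤ) ≤ n :=
  Int.le_of_dvd hn (by rw [Rat.intCast_div_eq_divInt]; exact Rat.den_dvd m n)

theorem Rat.den_sum_intCast_div_le_prod {ι : Type*} {s : Finset ι} {a : ι → ℤ} (b : ι → ℤ)
    (ha : ∀ i ∈ s, 0 < a i) :
    ((∑ i ∈ s, (b i : ℚ) / a i).den : ℝ) ≤ ∏ i ∈ s, (a i : ℝ) :=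
  calc ((∑ i ∈ s, (b i : ℚ) / a i).den : ℝ) ≤ ∏ i ∈ s, (((b i : ℚ) / a i).den : ℝ) := by
        exact_mod_cast Nat.le_of_dvd (prod_pos fun i _ => Rat.den_pos _)
          (Rat.den_sum_dvd_prod_den _ _)
    _ ≤ ∏ i ∈ s, (a i : ℝ) :=
        prod_le_prod (fun _ _ => by positivity)
          fun i hi => by exact_mod_cast Rat.den_intCast_div_le (ha i hi)

theorem tsum_nat_add_le_of_ratio_le {c : ℕ → ℝ} {r : ℝ} {N : ℕ} (hc : ∀ k, 0 ≤ c k)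
    (hr0 : 0 ≤ r) (hr : r < 1) (h : ∀ k ≥ N, c (k + 1) ≤ r * c k) {k : ℕ} (hk : N ≤ k) :
    ∑' i, c (i + k) ≤ c k / (1 - r) := by
  have hgeom : ∀ i, c (i + k) ≤ c k * r ^ i := by
    intro i
    induction i with
    | zero => simp
    | succ i ih =>
      calc c (i + 1 + k) = c (i + k + 1) := by rw [add_right_comm]
        _ ≤ r * c (i + k) := h _ (by omega)
        _ ≤ r * (c k * r ^ i) := by gcongr
        _ = c k * r ^ (i + 1) := by ring
  have hsum : Summable fun i => c k * r ^ i := (summable_geometric_of_lt_one hr0 hr).mul_left _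
  calc ∑' i, c (i + k) ≤ ∑' i, c k * r ^ i :=
        (hsum.of_nonneg_of_le (fun _ => hc _) hgeom).tsum_le_tsum hgeom hsum
    _ = c k / (1 - r) := by rw [tsum_mul_left, tsum_geometric_of_lt_one hr0 hr, div_eq_mul_inv]

theorem Filter.frequently_lt_of_limsup_coe_eq_top {α : Type*} {l : Filter α} {f : α → ℝ}
    (h : limsup (fun x => (f x : EReal)) l = ⊤) (M : ℝ) : ∃ᶠ x in l, M < f x :=
  (frequently_lt_of_lt_limsup (by isBoundedDefault) (h ▸ EReal.coe_lt_top M)).mono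
    fun _ hx => EReal.coe_lt_coe_iff.mp hx

theorem Filter.exists_lt_eventually_lt_of_lt_liminf_coe {α : Type*} {l : Filter α} {f : α → ℝ}
    {x : ℝ} (h : (x : EReal) < liminf (fun y => (f y : EReal)) l) :
    ∃ t, x < t ∧ ∀ᶠ y in l, t < f y := by
  obtain ⟨t, hxt, ht⟩ := EReal.lt_iff_exists_real_btwn.mp h
  exact ⟨t, EReal.coe_lt_coe_iff.mp hxt,
    (eventually_lt_of_lt_liminf ht).mono fun _ hy => EReal.coe_lt_coe_iff.mp hy⟩

theorem exists_ratio_le_of_one_lt_liminf {c : ℕ → ℝ} (hc : ∀ k, 0 < c k)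
    (h : 1 < liminf (fun k => ((c k / c (k + 1) : ℝ) : EReal)) atTop) :
    ∃ r, 0 ≤ r ∧ r < 1 ∧ ∃ N, ∀ k ≥ N, c (k + 1) ≤ r * c k := by
  obtain ⟨t, ht, hev⟩ := exists_lt_eventually_lt_of_lt_liminf_coe (x := 1) (by rwa [EReal.coe_one])
  obtain ⟨N, hN⟩ := eventually_atTop.mp hev
  refine ⟨t⁻¹, inv_nonneg.mpr (by linarith), inv_lt_one_of_one_lt₀ ht, N, fun k hk => ?_⟩
  rw [le_inv_mul_iff₀ (by linarith)]
  exact ((lt_div_iff₀ (hc _)).mp (hN k hk)).le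

theorem Filter.frequently_lt_of_limsup_coe_inv_eq_top {α : Type*} {l : Filter α} {f : α → ℝ}
    (hf : ∀ x, 0 < f x) (h : limsup (fun x => (((f x)⁻¹ : ℝ) : EReal)) l = ⊤) {η : ℝ}
    (hη : 0 < η) : ∃ᶠ x in l, f x < η :=
  (frequently_lt_of_limsup_coe_eq_top h η⁻¹).mono fun x hx => (inv_lt_inv₀ hη (hf x)).mp hx

theorem frequently_abs_tsum_sub_lt_of_ratio_le {c : ℕ → ℝ} {r κ : ℝ} {N : ℕ}
    (hc : ∀ k, 0 < c k) (hr0 : 0 ≤ r) (hr : r < 1) (hratio : ∀ k ≥ N, c (k + 1) ≤ r * c k)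
    {s : ℕ → ℚ} (hs : ∀ k, (s k : ℝ) = ∑ i ∈ range (k + 1), c i)
    (hsmall : ∀ η > 0, ∃ᶠ k in atTop, c (k + 1) * ((s k).den : ℝ) ^ κ < η) (ε : ℝ) (hε : 0 < ε) :
    ∃ᶠ k in atTop, (s k : ℝ) ≠ ∑' i, c i ∧ |∑' i, c i - s k| < ε / ((s k).den : ℝ) ^ κ := by
  have hsum : Summable c := summable_of_ratio_norm_eventually_le hr <|
    eventually_atTop.mpr ⟨N, fun k hk => by
      simpa only [Real.norm_eq_abs, abs_of_pos (hc _)] using hratio k hk⟩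
  refine (hsmall (ε * (1 - r)) (mul_pos hε (by linarith))).mp <|
    (eventually_ge_atTop N).mono fun k hk hsmall_k => ?_
  have htail : ∑' i, c i - s k = ∑' i, c (i + (k + 1)) := by
    rw [hs, ← hsum.sum_add_tsum_nat_add (k + 1)]
    ring
  have htail_pos : 0 < ∑' i, c (i + (k + 1)) :=
    ((summable_nat_add_iff (k + 1)).mpr hsum).tsum_pos (fun _ => (hc _).le) 0 (by simpa using hc _)
  refine ⟨ne_of_lt (by linarith), ?_⟩
  rw [htail, abs_of_pos htail_pos]
  calc ∑' i, c (i + (k + 1)) ≤ c (k + 1) / (1 - r) :=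
        tsum_nat_add_le_of_ratio_le (fun i => (hc i).le) hr0 hr hratio (by omega)
    _ < ε / ((s k).den : ℝ) ^ κ := by
        rw [div_lt_div_iff₀ (by linarith) (by positivity)]
        linarith

theorem HanclRucki1
    (hRoth : ∀ ξ κ : ℝ, IsAlgebraic ℚ ξ → Irrational ξ →
      {pq : ℤ × ℤ | 0 < pq.2 ∧ IsCoprime pq.1 pq.2 ∧
        |ξ - (pq.1 : ℝ) / (pq.2 : ℝ)| < 1 / (pq.2 : ℝ) ^ κ}.Infinite → κ ≤ 2)
    (a b : ℕ → ℤ) (δ : ℝ)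
    (ha : ∀ k, 0 < a k) (hb : ∀ k, 0 < b k) (hδ : 0 < δ)
    (hlimsup : Filter.limsup (fun k =>
      (((a (k + 1) : ℝ) / (∏ i ∈ Finset.range (k + 1), (a i : ℝ)) ^ ((2 : ℝ) + δ) *
        (1 / (b (k + 1) : ℝ)) : ℝ) : EReal)) atTop = ⊤)
    (hliminf : 1 < Filter.liminf (fun k =>
      (((a (k + 1) : ℝ) / (a k : ℝ) * ((b k : ℝ) / (b (k + 1) : ℝ)) : ℝ) : EReal)) atTop) :
    Transcendental ℚ (∑' k : ℕ, (b k : ℝ) / (a k : ℝ)) := by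
  set c : ℕ → ℝ := fun k => (b k : ℝ) / a k
  set Q : ℕ → ℝ := fun k => ∏ i ∈ range (k + 1), (a i : ℝ)
  set S : ℕ → ℚ := fun k => ∑ i ∈ range (k + 1), (b i : ℚ) / a i
  have hc : ∀ k, 0 < c k := fun k => div_pos (by exact_mod_cast hb k) (by exact_mod_cast ha k)
  have hQ : ∀ k, 0 < Q k := fun k => prod_pos fun i _ => by exact_mod_cast ha i
  have hS : ∀ k, (S k : ℝ) = ∑ i ∈ range (k + 1), c i := fun k => by push_cast [S, c]; rfl
  have hSmono : StrictMono S := strictMono_nat_of_lt_succ fun k => by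
    have : (0 : ℚ) < b (k + 1) / a (k + 1) := div_pos (mod_cast hb _) (mod_cast ha _)
    simp only [S, sum_range_succ _ (k + 1)]
    linarith
  obtain ⟨r, hr0, hr, N, hratio⟩ := exists_ratio_le_of_one_lt_liminf hc <| by
    convert hliminf using 4 with k
    simp only [c]
    field_simp
  refine transcendental_of_frequently_abs_sub_lt hRoth (by linarith : 2 < 2 + δ)
    hSmono.injective (frequently_abs_tsum_sub_lt_of_ratio_le hc hr0 hr hratio hS fun η hη => ?_)
  have hpos : ∀ k, 0 < c (k + 1) * Q k ^ (2 + δ) :=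
    fun k => mul_pos (hc _) (Real.rpow_pos_of_pos (hQ k) _)
  refine (frequently_lt_of_limsup_coe_inv_eq_top hpos ?_ hη).mono fun k hk => ?_
  · convert hlimsup using 4 with k
    simp only [c, Q]
    field_simp
  · have hden : ((S k).den : ℝ) ≤ Q k := Rat.den_sum_intCast_div_le_prod b fun i _ => ha i
    calc c (k + 1) * ((S k).den : ℝ) ^ (2 + δ) ≤ c (k + 1) * Q k ^ (2 + δ) := by
          gcongr
          exact (hc _).le
      _ < η := hk
end

section
/- Assume Roth's theorem as a hypothesis. Let δ, ε > 0 and let {a_n}, {b_n} be sequences of positive integers with limsup_{n→∞} a_{n+1} / ((∏_{i=1}^n a_i)^{2 + 2/ε + δ} · b_{n+1}) = ∞, and suppose that for all sufficiently large n, (a_{n+1}/b_{n+1})^{1/(1+ε)} ≥ (a_n/b_n)^{1/(1+ε)} + 1. Then ∑_{n=1}^∞ b_n/a_n is transcendental. -/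
/-!
Put `f k = (a k / b k) ^ (1 / (1 + ε))`, so that `b k / a k = f k ^ (-(1 + ε))` and `f` eventually
grows by at least `1` per step. For `t ≥ 1` we have
`(t + j) ^ (1 + ε) ≥ t ^ s * (j + 1) ^ (1 + ε - s)`; with `s = u (1 + ε) < ε` this bounds the tail
of the series after its `n`-th term by
`C * f (n + 1) ^ (-s) = C * (a (n + 1) / b (n + 1)) ^ (-u)`. The partial sums are fractions with
denominators `Q n = a 0 ⋯ a n`, and the limsup hypothesis gives `a (n + 1) / b (n + 1) ≥ Q n ^ R`,
`R = 2 + 2 / ε + δ`, infinitely often. So the sum is a Liouville number with exponent `R u`, and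
`R u > 2` once `u` is close enough to `ε / (1 + ε)`; Roth's theorem then rules out algebraicity.
-/

open Filter Finset

section Growth

variable {g : ℕ → ℝ}

theorem add_natCast_le_of_add_one_le (hg : ∀ j, g j + 1 ≤ g (j + 1)) (j : ℕ) :
    g 0 + j ≤ g j := by
  induction j with
  | zero => simp
  | succ j ih => push_cast; linarith [hg j]

theorem tendsto_atTop_of_eventually_add_one_le (hg : ∀ᶠ k in atTop, g k + 1 ≤ g (k + 1)) :
    Tendsto g atTop atTop := by
  obtain ⟨N, hN⟩ := hg.exists_forall_of_atTop
  have hshift : ∀ j, g (j + N) + 1 ≤ g (j + 1 + N) := fun j => by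
    rw [add_right_comm]; exact hN _ (Nat.le_add_left N j)
  rw [← tendsto_add_atTop_iff_nat N]
  refine tendsto_atTop_mono (fun j => ?_)
    (tendsto_atTop_add_const_left _ (g N) tendsto_natCast_atTop_atTop)
  simpa using add_natCast_le_of_add_one_le (g := fun j => g (j + N)) hshift j

theorem rpow_neg_add_le {t x s e : ℝ} (ht : 1 ≤ t) (hx : 0 ≤ x) (hs : 0 ≤ s)
    (hse : s ≤ e) :
    (t + x) ^ (-e) ≤ t ^ (-s) * (x + 1) ^ (-(e - s)) := by
  rw [Real.rpow_neg (by positivity), Real.rpow_neg (by positivity),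
    Real.rpow_neg (by positivity), ← mul_inv]
  refine inv_anti₀ (by positivity) ?_
  calc t ^ s * (x + 1) ^ (e - s) ≤ (t + x) ^ s * (t + x) ^ (e - s) :=
        mul_le_mul (Real.rpow_le_rpow (by positivity) (by linarith) hs)
          (Real.rpow_le_rpow (by positivity) (by linarith) (by linarith)) (by positivity)
          (by positivity)
    _ = (t + x) ^ e := by rw [← Real.rpow_add (by positivity), add_sub_cancel]

theorem summable_natCast_add_one_rpow_neg {p : ℝ} (hp : 1 < p) :
    Summable fun j : ℕ => ((j : ℝ) + 1) ^ (-p) := by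
  simpa using (summable_nat_add_iff 1).2 (Real.summable_nat_rpow.2 (by linarith : -p < -1))

variable (hg0 : 1 ≤ g 0) (hg : ∀ j, g j + 1 ≤ g (j + 1))
include hg0 hg

theorem rpow_neg_le_of_add_one_le {s e : ℝ} (hs : 0 ≤ s) (hse : s ≤ e) (j : ℕ) :
    g j ^ (-e) ≤ g 0 ^ (-s) * ((j : ℝ) + 1) ^ (-(e - s)) :=
  (Real.rpow_le_rpow_of_nonpos (by positivity) (add_natCast_le_of_add_one_le hg j)
    (by linarith)).trans (rpow_neg_add_le hg0 j.cast_nonneg hs hse)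

theorem summable_rpow_neg_of_add_one_le {e : ℝ} (he : 1 < e) :
    Summable fun j => g j ^ (-e) := by
  refine (summable_natCast_add_one_rpow_neg he).of_nonneg_of_le
    (fun j => Real.rpow_nonneg ?_ _) (fun j => ?_)
  · linarith [add_natCast_le_of_add_one_le hg j, j.cast_nonneg (α := ℝ)]
  · simpa using rpow_neg_le_of_add_one_le hg0 hg le_rfl (by linarith) j

theorem tsum_rpow_neg_le_of_add_one_le {s e : ℝ} (hs : 0 ≤ s) (hse : s + 1 < e) :
    ∑' j, g j ^ (-e) ≤ (∑' j : ℕ, ((j : ℝ) + 1) ^ (-(e - s))) * g 0 ^ (-s) := by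
  rw [← tsum_mul_right]
  refine (summable_rpow_neg_of_add_one_le hg0 hg (by linarith)).tsum_le_tsum (fun j => ?_)
    ((summable_natCast_add_one_rpow_neg (by linarith)).mul_right _)
  exact (rpow_neg_le_of_add_one_le hg0 hg hs (by linarith) j).trans_eq (mul_comm _ _)

end Growth

theorem exists_int_sum_div_eq_div_prod {ι K : Type*} [Field K] (s : Finset ι) (a b : ι → ℤ)
    (ha : ∀ i ∈ s, (a i : K) ≠ 0) :
    ∃ P : ℤ, ∑ i ∈ s, (b i : K) / a i = P / ∏ i ∈ s, (a i : K) := by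
  classical
  induction s using Finset.induction_on with
  | empty => exact ⟨0, by simp⟩
  | insert i s hi ih =>
    obtain ⟨P, hP⟩ := ih fun j hj => ha j (mem_insert_of_mem hj)
    have hai := ha i (mem_insert_self i s)
    have hs : ∏ j ∈ s, (a j : K) ≠ 0 :=
      prod_ne_zero_iff.2 fun j hj => ha j (mem_insert_of_mem hj)
    refine ⟨b i * ∏ j ∈ s, a j + P * a i, ?_⟩
    rw [sum_insert hi, prod_insert hi, hP]
    push_cast
    field_simp

theorem exists_coprime_div_eq (m : ℤ) {n : ℕ} (hn : 0 < n) :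
    ∃ p q : ℤ, 0 < q ∧ q ≤ n ∧ IsCoprime p q ∧ (p : ℝ) / q = m / n := by
  set r : ℚ := Rat.divInt m n with hr
  refine ⟨r.num, r.den, by exact_mod_cast r.pos,
    Int.le_of_dvd (by exact_mod_cast hn) (Rat.den_dvd m n), r.isCoprime_num_den, ?_⟩
  rw [Int.cast_natCast, ← Rat.cast_def, hr]
  simp [Rat.divInt_eq_div]

theorem Set.infinite_of_forall_exists_pos_lt {α : Type*} {S : Set α} (φ : α → ℝ)
    (h : ∀ η > 0, ∃ x ∈ S, 0 < φ x ∧ φ x < η) : S.Infinite := by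
  intro hS
  obtain ⟨x, hx, hx0, -⟩ := h 1 one_pos
  obtain ⟨y, ⟨hy, hy0⟩, hmin⟩ :=
    Set.exists_min_image {x ∈ S | 0 < φ x} φ (hS.subset (Set.sep_subset _ _)) ⟨x, hx, hx0⟩
  obtain ⟨z, hz, hz0, hzy⟩ := h (φ y) hy0
  exact (hmin z ⟨hz, hz0⟩).not_gt hzy

theorem LiouvilleWith.infinite_setOf_coprime_approx {p q x : ℝ} (h : LiouvilleWith p x)
    (hq : 0 < q) (hqp : q < p) :
    {pq : ℤ × ℤ | 0 < pq.2 ∧ IsCoprime pq.1 pq.2 ∧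
      |x - (pq.1 : ℝ) / (pq.2 : ℝ)| < 1 / (pq.2 : ℝ) ^ q}.Infinite := by
  refine Set.infinite_of_forall_exists_pos_lt (fun pq => |x - (pq.1 : ℝ) / pq.2|)
    fun η hη => ?_
  have hsmall : ∀ᶠ n : ℕ in atTop, (n : ℝ) ^ (-q) < η :=
    ((tendsto_rpow_neg_atTop hq).comp tendsto_natCast_atTop_atTop).eventually (gt_mem_nhds hη)
  obtain ⟨n, ⟨m, hne, hlt⟩, hnη, hn⟩ :=
    ((h.frequently_lt_rpow_neg hqp).and_eventually (hsmall.and (eventually_gt_atTop 0))).exists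
  obtain ⟨p', q', hq'0, hq'n, hcop, heq⟩ := exists_coprime_div_eq m hn
  have hbound : (n : ℝ) ^ (-q) ≤ 1 / (q' : ℝ) ^ q := by
    rw [Real.rpow_neg n.cast_nonneg, one_div]
    gcongr
    exact_mod_cast hq'n
  refine ⟨(p', q'), ⟨hq'0, hcop, ?_⟩, ?_, ?_⟩ <;> simp only [heq]
  · exact hlt.trans_le hbound
  · exact abs_pos.2 (sub_ne_zero.2 hne)
  · exact hlt.trans hnη

theorem div_eq_rpow_one_div_rpow_neg {x y e : ℝ} (h : 0 ≤ x / y) (he : e ≠ 0) :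
    y / x = ((x / y) ^ (1 / e)) ^ (-e) := by
  rw [Real.rpow_neg (by positivity), one_div, Real.rpow_inv_rpow h he, inv_div]

section Series

variable {a b : ℕ → ℕ} {ε : ℝ}

theorem tendsto_prod_range_atTop (ha : ∀ k, 0 < a k) (hb : ∀ k, 0 < b k) (hε : 0 < ε)
    (hgrow : ∀ᶠ k in atTop,
      ((a k : ℝ) / b k) ^ (1 / (1 + ε)) + 1 ≤ ((a (k + 1) : ℝ) / b (k + 1)) ^ (1 / (1 + ε))) :
    Tendsto (fun n => ∏ i ∈ range (n + 1), a i) atTop atTop := by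
  have hratio : Tendsto (fun k => (a k : ℝ) / b k) atTop atTop := by
    refine ((tendsto_rpow_atTop (by linarith : 0 < 1 + ε)).comp
      (tendsto_atTop_of_eventually_add_one_le hgrow)).congr fun k => ?_
    simp only [Function.comp_apply, one_div]
    exact Real.rpow_inv_rpow (by positivity) (by positivity)
  have ha_top : Tendsto a atTop atTop := tendsto_natCast_atTop_iff.1 <|
    tendsto_atTop_mono (fun k => div_le_self (by positivity) (by exact_mod_cast hb k)) hratio
  exact tendsto_atTop_mono (fun n => Nat.le_of_dvd (prod_pos fun i _ => ha i)
    (dvd_prod_of_mem a (self_mem_range_succ n))) ha_top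

theorem tsum_div_tail_le (hε : 0 < ε) {N : ℕ}
    (hN : ∀ k ≥ N,
      ((a k : ℝ) / b k) ^ (1 / (1 + ε)) + 1 ≤ ((a (k + 1) : ℝ) / b (k + 1)) ^ (1 / (1 + ε)))
    {u : ℝ} (hu0 : 0 ≤ u) (hu : u < ε / (1 + ε)) {n : ℕ} (hn : N ≤ n) :
    Summable (fun j => (b (j + (n + 1)) : ℝ) / a (j + (n + 1))) ∧
      ∑' j, (b (j + (n + 1)) : ℝ) / a (j + (n + 1)) ≤
        (∑' j : ℕ, ((j : ℝ) + 1) ^ (-(1 + ε - u * (1 + ε)))) *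
          ((a (n + 1) : ℝ) / b (n + 1)) ^ (-u) := by
  set g : ℕ → ℝ := fun j => ((a (j + (n + 1)) : ℝ) / b (j + (n + 1))) ^ (1 / (1 + ε))
  have hg : ∀ j, g j + 1 ≤ g (j + 1) := fun j => by
    simpa only [g, add_right_comm j 1] using hN (j + (n + 1)) (by omega)
  have hg0 : 1 ≤ g 0 := by
    simp only [g, zero_add]
    linarith [hN n hn, Real.rpow_nonneg (by positivity : (0 : ℝ) ≤ a n / b n) (1 / (1 + ε))]
  have hse : u * (1 + ε) + 1 < 1 + ε := by rw [lt_div_iff₀ (by linarith)] at hu; linarith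
  simp only [fun k => div_eq_rpow_one_div_rpow_neg (by positivity : (0 : ℝ) ≤ a k / b k)
    (by positivity : 1 + ε ≠ 0)]
  refine ⟨summable_rpow_neg_of_add_one_le hg0 hg (by linarith), ?_⟩
  convert tsum_rpow_neg_le_of_add_one_le hg0 hg (by positivity) hse using 2
  simp only [g, zero_add]
  rw [← Real.rpow_mul (by positivity)]
  congr 1
  field_simp

theorem liouvilleWith_tsum_div (ha : ∀ k, 0 < a k) (hb : ∀ k, 0 < b k) (hε : 0 < ε)
    (hgrow : ∀ᶠ k in atTop,
      ((a k : ℝ) / b k) ^ (1 / (1 + ε)) + 1 ≤ ((a (k + 1) : ℝ) / b (k + 1)) ^ (1 / (1 + ε)))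
    {R : ℝ}
    (hfreq : ∃ᶠ n in atTop, (∏ i ∈ range (n + 1), (a i : ℝ)) ^ R ≤ (a (n + 1) : ℝ) / b (n + 1))
    {u : ℝ} (hu0 : 0 ≤ u) (hu : u < ε / (1 + ε)) :
    LiouvilleWith (R * u) (∑' k, (b k : ℝ) / a k) := by
  obtain ⟨N, hN⟩ := hgrow.exists_forall_of_atTop
  have hsum : Summable fun k => (b k : ℝ) / a k :=
    (summable_nat_add_iff (N + 1)).1 (tsum_div_tail_le hε hN hu0 hu le_rfl).1
  have hP (n : ℕ) :
      ∃ P : ℤ, ∑ k ∈ range (n + 1), (b k : ℝ) / a k = P / ∏ i ∈ range (n + 1), a i := by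
    simpa using exists_int_sum_div_eq_div_prod (K := ℝ) (range (n + 1)) (fun i => (a i : ℤ))
      (fun i => (b i : ℤ)) fun i _ => by exact_mod_cast (ha i).ne'
  choose P hP using hP
  set C := ∑' j : ℕ, ((j : ℝ) + 1) ^ (-(1 + ε - u * (1 + ε)))
  refine ⟨C + 1, (tendsto_prod_range_atTop ha hb hε hgrow).frequently_map _ ?_
    (hfreq.and_eventually (eventually_ge_atTop N))⟩
  rintro n ⟨hQR, hn⟩
  obtain ⟨hsum_tail, htail⟩ := tsum_div_tail_le hε hN hu0 hu hn
  set Q : ℝ := ((∏ i ∈ range (n + 1), a i : ℕ) : ℝ)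
  have hQ : 0 < Q := Nat.cast_pos.2 (prod_pos fun i _ => ha i)
  have htail_eq :
      ∑' k, (b k : ℝ) / a k - P n / Q = ∑' j, (b (j + (n + 1)) : ℝ) / a (j + (n + 1)) := by
    rw [← hP, ← hsum.sum_add_tsum_nat_add (n + 1)]
    ring
  have hpos : 0 < ∑' k, (b k : ℝ) / a k - P n / Q :=
    htail_eq ▸ hsum_tail.tsum_pos (fun j => by positivity) 0
      (div_pos (Nat.cast_pos.2 (hb _)) (Nat.cast_pos.2 (ha _)))
  refine ⟨P n, (sub_pos.1 hpos).ne', ?_⟩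
  rw [abs_of_pos hpos, htail_eq]
  calc _ ≤ C * ((a (n + 1) : ℝ) / b (n + 1)) ^ (-u) := htail
    _ ≤ C * (Q ^ R) ^ (-u) := by
        refine mul_le_mul_of_nonneg_left ?_ (tsum_nonneg fun j => by positivity)
        exact Real.rpow_le_rpow_of_nonpos (Real.rpow_pos_of_pos hQ R)
          (by simpa only [Q, Nat.cast_prod] using hQR) (by linarith)
    _ = C / Q ^ (R * u) := by
        rw [← Real.rpow_mul hQ.le, mul_neg, Real.rpow_neg hQ.le, div_eq_mul_inv]
    _ < (C + 1) / Q ^ (R * u) := by gcongr; linarith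

end Series

theorem HanclRucki2
    (hRoth : ∀ ξ κ : ℝ, IsAlgebraic ℚ ξ → Irrational ξ →
      {pq : ℤ × ℤ | 0 < pq.2 ∧ IsCoprime pq.1 pq.2 ∧
        |ξ - (pq.1 : ℝ) / (pq.2 : ℝ)| < 1 / (pq.2 : ℝ) ^ κ}.Infinite → κ ≤ 2)
    (a b : ℕ → ℤ) (δ ε : ℝ)
    (ha : ∀ k, 0 < a k) (hb : ∀ k, 0 < b k) (hδ : 0 < δ) (hε : 0 < ε)
    (hlimsup : Filter.limsup (fun k =>
      (((a (k + 1) : ℝ) / (∏ i ∈ Finset.range (k + 1), (a i : ℝ)) ^ ((2 : ℝ) + 2 / ε + δ) *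
        (1 / (b (k + 1) : ℝ)) : ℝ) : EReal)) atTop = ⊤)
    (hev : ∀ᶠ k in atTop,
      ((a k : ℝ) / (b k : ℝ)) ^ ((1 : ℝ) / (1 + ε)) + 1 ≤
        ((a (k + 1) : ℝ) / (b (k + 1) : ℝ)) ^ ((1 : ℝ) / (1 + ε))) :
    Transcendental ℚ (∑' k : ℕ, (b k : ℝ) / (a k : ℝ)) := by
  lift a to ℕ → ℕ using fun k => (ha k).le
  lift b to ℕ → ℕ using fun k => (hb k).le
  simp only [Int.cast_natCast, Nat.cast_pos] at ha hb hlimsup hev ⊢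
  set R : ℝ := 2 + 2 / ε + δ
  have hfreq : ∃ᶠ n in atTop,
      (∏ i ∈ range (n + 1), (a i : ℝ)) ^ R ≤ (a (n + 1) : ℝ) / b (n + 1) := by
    refine (frequently_lt_of_lt_limsup (by isBoundedDefault)
      (hlimsup ▸ EReal.coe_lt_top 1)).mono fun n hn => ?_
    have hQ : 0 < (∏ i ∈ range (n + 1), (a i : ℝ)) ^ R :=
      Real.rpow_pos_of_pos (prod_pos fun i _ => Nat.cast_pos.2 (ha i)) R
    rw [EReal.coe_lt_coe_iff, mul_one_div, div_right_comm, one_lt_div hQ] at hn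
    exact hn.le
  have hR : 0 < R := by positivity
  have hRε : 2 / R < ε / (1 + ε) := by
    rw [div_lt_div_iff₀ hR (by linarith)]
    have : R * ε = 2 * ε + 2 + δ * ε := by simp only [R]; field_simp
    nlinarith
  obtain ⟨u, h2u, huε⟩ := exists_between hRε
  have hLiouville :=
    liouvilleWith_tsum_div ha hb hε hev hfreq (div_pos two_pos hR |>.trans h2u).le huε
  obtain ⟨κ, h2κ, hκ⟩ := exists_between ((div_lt_iff₀' hR).1 h2u)
  exact fun halg => h2κ.not_ge <| hRoth _ κ halg (hLiouville.irrational (by linarith))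
    (hLiouville.infinite_setOf_coprime_approx (by linarith) hκ)
end

section
/- Under the hypotheses of Hančl's Theorem 3 (A > 1; d_n > 1 for all n with ∏ d_n convergent; a_n, b_n positive integers; a_n^{1/2^n} → A; d_n^{2^n}/b_n → ∞), the series ∑ b_n / a_n is summable. -/
/-!
Fix `1 < s < c < A`. Since the product of the `d n` converges to a nonzero limit, `d n → 1`, so
eventually `|b n| ≤ d n ^ 2 ^ n ≤ s ^ 2 ^ n`, while `a n ^ (1 / 2 ^ n) → A` gives `c ^ 2 ^ n < |a n|`.
Hence `|b n / a n| ≤ (s / c) ^ 2 ^ n ≤ (s / c) ^ n`, and the series is dominated by a geometric one.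
-/

open Filter Topology

theorem HasProd.tendsto_atTop_one_of_ne_zero {K : Type*} [Field K] [TopologicalSpace K]
    [IsTopologicalDivisionRing K] [T1Space K] {f : ℕ → K} {L : K} (hf : HasProd f L) (hL : L ≠ 0) :
    Tendsto f atTop (𝓝 1) := by
  have hpartial := hf.tendsto_prod_nat
  have hratio : Tendsto (fun n ↦ (∏ i ∈ Finset.range (n + 1), f i) / ∏ i ∈ Finset.range n, f i)
      atTop (𝓝 1) := by
    have := (hpartial.comp (tendsto_add_atTop_nat 1)).div hpartial hL
    rwa [div_self hL] at this
  refine hratio.congr' ?_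
  filter_upwards [hpartial.eventually_ne hL] with n hn
  rw [Finset.prod_range_succ, mul_div_cancel_left₀ _ hn]

theorem Real.pow_lt_abs_of_lt_rpow_one_div {x c : ℝ} {m : ℕ} (hc : 0 ≤ c) (hm : m ≠ 0)
    (h : c < x ^ ((1 : ℝ) / m)) : c ^ m < |x| := by
  have hc_abs : c < |x| ^ ((m : ℝ)⁻¹) := by
    simpa only [one_div] using h.trans_le ((le_abs_self _).trans (Real.abs_rpow_le_abs_rpow x _))
  simpa only [Real.rpow_inv_natCast_pow (abs_nonneg x) hm] using
    pow_lt_pow_left₀ hc_abs hc hm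

theorem abs_le_of_one_le_div {x y : ℝ} (hy : 0 < y) (h : 1 ≤ y / x) : |x| ≤ y := by
  have hx : 0 < x := by
    by_contra! hx
    linarith [div_nonpos_of_nonneg_of_nonpos hy.le hx]
  rwa [abs_of_pos hx, ← one_le_div hx]

theorem summable_of_norm_le_pow_two_pow {E : Type*} [NormedAddCommGroup E] [CompleteSpace E]
    {f : ℕ → E} {r : ℝ} (hr₀ : 0 ≤ r) (hr₁ : r < 1) (h : ∀ᶠ n in atTop, ‖f n‖ ≤ r ^ 2 ^ n) :
    Summable f := by
  refine .of_norm_bounded_eventually_nat (summable_geometric_of_lt_one hr₀ hr₁) ?_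
  filter_upwards [h] with n hn
  exact hn.trans (pow_le_pow_of_le_one hr₀ hr₁.le Nat.lt_two_pow_self.le)

theorem issummable_general (A : ℝ) (d : ℕ → ℝ) (a b : ℕ → ℤ)
    (hA : 1 < A) (hd : ∀ n, 1 < d n) (hdprod : Multipliable d)
    (assu1 : Tendsto (fun n => (a n : ℝ) ^ ((1 : ℝ) / 2 ^ n)) atTop (nhds A))
    (assu3 : Tendsto (fun n => d n ^ (2 ^ n : ℕ) / (b n : ℝ)) atTop atTop) :
    Summable (fun n => (b n : ℝ) / (a n : ℝ)) := by
  obtain ⟨c, hc1, hcA⟩ := exists_between hA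
  obtain ⟨s, hs1, hsc⟩ := exists_between hc1
  have hprod_ge_one : 1 ≤ ∏' n, d n :=
    ge_of_tendsto' hdprod.hasProd fun t ↦ Finset.one_le_prod fun n _ ↦ (hd n).le
  have hd_lim : Tendsto d atTop (𝓝 1) :=
    hdprod.hasProd.tendsto_atTop_one_of_ne_zero (one_pos.trans_le hprod_ge_one).ne'
  refine summable_of_norm_le_pow_two_pow (by positivity) ((div_lt_one (by positivity)).2 hsc) ?_
  filter_upwards [assu1.eventually_const_lt hcA, hd_lim.eventually_lt_const hs1,
    assu3.eventually_ge_atTop 1] with n ha_root hd_lt hb_ratio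
  have ha_abs : c ^ 2 ^ n < |(a n : ℝ)| :=
    Real.pow_lt_abs_of_lt_rpow_one_div (by positivity) (by positivity) (by exact_mod_cast ha_root)
  have hd_pos : 0 < d n := one_pos.trans (hd n)
  have hb_abs : |(b n : ℝ)| ≤ s ^ 2 ^ n :=
    (abs_le_of_one_le_div (pow_pos hd_pos _) hb_ratio).trans (pow_le_pow_left₀ hd_pos.le hd_lt.le _)
  rw [Real.norm_eq_abs, abs_div, div_pow]
  exact div_le_div₀ (by positivity) hb_abs (by positivity) ha_abs.le

theorem issummable (A : ℝ) (d : ℕ → ℝ) (a b : ℕ → ℤ)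
    (hA : 1 < A) (hd : ∀ n, 1 < d n) (hdprod : Multipliable d)
    (ha : ∀ n, 0 < a n) (hb : ∀ n, 0 < b n)
    (assu1 : Tendsto (fun n => (a n : ℝ) ^ ((1 : ℝ) / 2 ^ n)) atTop (nhds A))
    (assu3 : Tendsto (fun n => d n ^ (2 ^ n : ℕ) / (b n : ℝ)) atTop atTop) :
    Summable (fun n => (b n : ℝ) / (a n : ℝ)) :=
  issummable_general A d a b hA hd hdprod assu1 assu3
end

section
/- Counterexample lemma: there exist sequences of positive integers {a_n}, {b_n} satisfying limsup a_{n+1}/((∏_{i=1}^n a_i)^{2+δ} b_{n+1}) = ∞ and liminf (a_{n+1}/a_n)(b_n/b_{n+1}) > 1, yet such that it is NOT the case that for every real A > 1 there exists k_0 with (1/A)·(b_k/a_k) > b_{k+1}/a_{k+1} for all k > k_0. Concretely, with b_k = 1 for all k, a_{k+1} = k·(∏_{i=1}^k a_i)^{⌈2+δ⌉} for odd k and a_{k+1} = 2·a_k for even k, the claim 'for each A > 1' fails (though it holds for some A > 1). -/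
/-!
Take `b = 1` and `c = ⌈2 + δ⌉₊ ≥ 2`. At odd `k` the term `a (k+1) = k (a 0 ⋯ a k) ^ c` exceeds
`(a 0 ⋯ a k) ^ (2 + δ)` by at least the factor `k`, so the limsup is infinite. Always
`a (k+1) ≥ 2 a k`, so the liminf of the ratios is at least `2` and the decay condition holds with
`A = 3/2`; but at even `k` the ratio `a (k+1) / a k` is exactly `2`, so it fails for `A = 2`.
-/

open Filter Finset

theorem frequently_odd_le_natCast (y : ℝ) : ∃ᶠ k : ℕ in atTop, Odd k ∧ y ≤ k := by
  refine frequently_atTop.2 fun n => ⟨2 * max n ⌈y⌉₊ + 1, by omega, odd_two_mul_add_one _, ?_⟩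
  calc y ≤ ⌈y⌉₊ := Nat.le_ceil y
    _ ≤ _ := by exact_mod_cast (by omega : ⌈y⌉₊ ≤ 2 * max n ⌈y⌉₊ + 1)

theorem EReal.limsup_coe_eq_top_of_frequently_le {α : Type*} {f : Filter α} {u : α → ℝ}
    (h : ∀ y : ℝ, ∃ᶠ x in f, y ≤ u x) : limsup (fun x => (u x : EReal)) f = ⊤ := by
  refine (EReal.eq_top_iff_forall_lt _).2 fun y => ?_
  calc (y : EReal) < (y + 1 : ℝ) := EReal.coe_lt_coe_iff.2 (lt_add_one y)
    _ ≤ _ := le_limsup_of_frequently_le' ((h (y + 1)).mono fun x hx => EReal.coe_le_coe_iff.2 hx)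

theorem one_div_lt_one_div_mul_one_div_iff {K : Type*} [Field K] [LinearOrder K]
    [IsStrictOrderedRing K] {x y A : K} (hx : 0 < x) (hy : 0 < y) (hA : 0 < A) :
    1 / y < 1 / A * (1 / x) ↔ A < y / x := by
  rw [one_div_mul_one_div, one_div_lt_one_div hy (mul_pos hA hx), lt_div_iff₀ hx]

namespace HanclRucki

/-- `(a k, a 0 * ⋯ * a k)`: carrying the product along makes the recursion structural. -/
def seqProd (c : ℕ) : ℕ → ℕ × ℕ
  | 0 => (1, 1)
  | k + 1 =>
      let a := if Odd k then k * (seqProd c k).2 ^ c else 2 * (seqProd c k).1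
      (a, (seqProd c k).2 * a)

def seq (c k : ℕ) : ℕ := (seqProd c k).1

variable {c k : ℕ}

theorem seq_zero (c : ℕ) : seq c 0 = 1 := rfl

theorem seqProd_snd (c k : ℕ) : (seqProd c k).2 = ∏ i ∈ range (k + 1), seq c i := by
  induction k with
  | zero => rfl
  | succ k ih => rw [prod_range_succ, ← ih]; rfl

theorem seq_succ_of_odd (hk : Odd k) :
    seq c (k + 1) = k * (∏ i ∈ range (k + 1), seq c i) ^ c := by
  simp [seq, seqProd, hk, seqProd_snd]

theorem seq_succ_of_even (hk : Even k) : seq c (k + 1) = 2 * seq c k := by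
  simp [seq, seqProd, Nat.not_odd_iff_even.mpr hk]

theorem seq_pos (c k : ℕ) : 0 < seq c k := by
  induction k using Nat.strong_induction_on with
  | _ k ih =>
    rcases k with _ | k
    · exact Nat.one_pos
    rcases Nat.even_or_odd k with hk | hk
    · rw [seq_succ_of_even hk]
      exact Nat.mul_pos two_pos (ih k k.lt_succ_self)
    · rw [seq_succ_of_odd hk]
      refine Nat.mul_pos hk.pos (pow_pos (prod_pos fun i hi => ih i ?_) c)
      exact mem_range.1 hi

theorem seq_le_prod {j : ℕ} (hj : j ≤ k) : seq c j ≤ ∏ i ∈ range (k + 1), seq c i :=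
  single_le_prod' (fun i _ => seq_pos c i) (mem_range.2 (Nat.lt_succ_of_le hj))

theorem two_mul_seq_le_seq_succ (hc : 2 ≤ c) (k : ℕ) : 2 * seq c k ≤ seq c (k + 1) := by
  rcases Nat.even_or_odd k with hk | hk
  · exact (seq_succ_of_even hk).ge
  rw [seq_succ_of_odd hk]
  set P := ∏ i ∈ range (k + 1), seq c i
  -- `a 1 = 2` is one of the factors of `P`
  have hP : 2 ≤ P := (seq_le_prod (c := c) hk.pos).trans_eq' (seq_succ_of_even ⟨0, rfl⟩)
  calc 2 * seq c k ≤ P * P := Nat.mul_le_mul hP (seq_le_prod le_rfl)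
    _ = P ^ 2 := (sq P).symm
    _ ≤ P ^ c := Nat.pow_le_pow_right (by omega) hc
    _ ≤ k * P ^ c := Nat.le_mul_of_pos_left _ hk.pos

theorem two_le_seq_succ_div (hc : 2 ≤ c) (k : ℕ) : (2 : ℝ) ≤ seq c (k + 1) / seq c k := by
  rw [le_div_iff₀ (by exact_mod_cast seq_pos c k)]
  exact_mod_cast two_mul_seq_le_seq_succ hc k

theorem seq_succ_div_of_even (hk : Even k) : (seq c (k + 1) : ℝ) / seq c k = 2 := by
  rw [seq_succ_of_even hk, Nat.cast_mul, Nat.cast_two,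
    mul_div_cancel_right₀ _ (by exact_mod_cast (seq_pos c k).ne')]

theorem natCast_le_seq_succ_div_prod_rpow {r : ℝ} (hr : r ≤ c) (hk : Odd k) :
    (k : ℝ) ≤ seq c (k + 1) / (∏ i ∈ range (k + 1), (seq c i : ℝ)) ^ r := by
  have hP : 1 ≤ ∏ i ∈ range (k + 1), (seq c i : ℝ) := by
    rw [← Nat.cast_prod, Nat.one_le_cast]
    exact (seq_le_prod (Nat.zero_le k)).trans_eq' (seq_zero c).symm
  set P : ℝ := ∏ i ∈ range (k + 1), (seq c i : ℝ)
  have hPr : 0 < P ^ r := Real.rpow_pos_of_pos (one_pos.trans_le hP) r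
  have hseq : (seq c (k + 1) : ℝ) = k * P ^ c := by
    rw [seq_succ_of_odd hk]; push_cast; rfl
  rw [hseq, le_div_iff₀ hPr, ← Real.rpow_natCast]
  exact mul_le_mul_of_nonneg_left (Real.rpow_le_rpow_of_exponent_le hP hr) k.cast_nonneg

end HanclRucki

open HanclRucki

theorem hancl_rucki_counterexample (δ : ℝ) (hδ : 0 < δ) :
    ∃ a b : ℕ → ℤ, (∀ k, 0 < a k) ∧ (∀ k, 0 < b k) ∧
      (∀ k, b k = 1) ∧
      (∀ k, Odd k → a (k + 1) = (k : ℤ) *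
        (∏ i ∈ Finset.range (k + 1), a i) ^ (⌈(2 : ℝ) + δ⌉₊)) ∧
      (∀ k, Even k → a (k + 1) = 2 * a k) ∧
      Filter.limsup (fun k =>
        (((a (k + 1) : ℝ) / (∏ i ∈ Finset.range (k + 1), (a i : ℝ)) ^ ((2 : ℝ) + δ) *
          (1 / (b (k + 1) : ℝ)) : ℝ) : EReal)) atTop = ⊤ ∧
      1 < Filter.liminf (fun k =>
        (((a (k + 1) : ℝ) / (a k : ℝ) * ((b k : ℝ) / (b (k + 1) : ℝ)) : ℝ) : EReal)) atTop ∧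
      ¬ (∀ A : ℝ, 1 < A → ∃ k₀ : ℕ, ∀ k > k₀,
          (b (k + 1) : ℝ) / (a (k + 1) : ℝ) < (1 / A) * ((b k : ℝ) / (a k : ℝ))) ∧
      (∃ A : ℝ, 1 < A ∧ ∃ k₀ : ℕ, ∀ k > k₀,
          (b (k + 1) : ℝ) / (a (k + 1) : ℝ) < (1 / A) * ((b k : ℝ) / (a k : ℝ))) := by
  set c := ⌈(2 : ℝ) + δ⌉₊
  have hcδ : 2 + δ ≤ (c : ℝ) := Nat.le_ceil _
  have hc : 2 ≤ c := Nat.lt_ceil.2 (by norm_num; linarith)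
  have hpos (k : ℕ) : (0 : ℝ) < seq c k := by exact_mod_cast seq_pos c k
  refine ⟨fun k => seq c k, fun _ => 1, fun k => Int.natCast_pos.2 (seq_pos c k), fun _ => one_pos,
    fun _ => rfl, fun k hk => ?_, fun k hk => ?_, ?_, ?_, ?_, ?_⟩ <;>
    simp only [Int.cast_natCast, Int.cast_one, div_one, mul_one]
  · exact_mod_cast seq_succ_of_odd hk
  · exact_mod_cast seq_succ_of_even hk
  · refine EReal.limsup_coe_eq_top_of_frequently_le fun y => (frequently_odd_le_natCast y).mono ?_
    exact fun k ⟨hk, hy⟩ => hy.trans (natCast_le_seq_succ_div_prod_rpow hcδ hk)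
  · calc (1 : EReal) < (2 : ℝ) := by exact_mod_cast one_lt_two
      _ ≤ _ := le_liminf_of_le (by isBoundedDefault) (Eventually.of_forall fun k =>
        EReal.coe_le_coe_iff.2 (two_le_seq_succ_div hc k))
  · intro h
    obtain ⟨k₀, hk₀⟩ := h 2 one_lt_two
    have hdecay := hk₀ (2 * k₀ + 2) (by omega)
    rw [one_div_lt_one_div_mul_one_div_iff (hpos _) (hpos _) two_pos,
      seq_succ_div_of_even ⟨k₀ + 1, by ring⟩] at hdecay
    exact lt_irrefl _ hdecay
  · refine ⟨3 / 2, by norm_num, 0, fun k _ => ?_⟩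
    rw [one_div_lt_one_div_mul_one_div_iff (hpos _) (hpos _) (by norm_num)]
    linarith [two_le_seq_succ_div hc k]
end

section
/- For 0 < ε < 1/2, for all sufficiently large natural numbers N, the number of integers n in the interval [N, 2N) for which p_{n+1} > p_n + √(p_n) holds is less than N/2, where p_n is the n-th prime. -/
/-!
The gaps `p (n + 1) - p n` for `N ≤ n < 2N` telescope to `p (2N) - p N`, and every gap counted
exceeds `√(p n) ≥ √N`, so at most `p (2N) / √N` of them are large. Chebyshev's lower bound
`π x ≫ x / log x` gives `p n = o(n √n)`, hence `p (2N) / √N < N / 2` for large `N`.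
-/

open Filter Finset
open scoped Classical

open Real Asymptotics
open scoped Nat.Prime

lemma card_filter_add_lt_mul_le {p t : ℕ → ℝ} (hp : Monotone p) {c : ℝ} {a b : ℕ} (hab : a ≤ b)
    (ht : ∀ n ∈ Ico a b, c ≤ t n) :
    #{n ∈ Ico a b | p n + t n < p (n + 1)} * c ≤ p b - p a :=
  calc #{n ∈ Ico a b | p n + t n < p (n + 1)} * c
      = ∑ n ∈ Ico a b with p n + t n < p (n + 1), c := by rw [sum_const, nsmul_eq_mul]
    _ ≤ ∑ n ∈ Ico a b with p n + t n < p (n + 1), (p (n + 1) - p n) := by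
        refine sum_le_sum fun n hn => ?_
        rw [mem_filter] at hn
        linarith [ht n hn.1]
    _ ≤ ∑ n ∈ Ico a b, (p (n + 1) - p n) :=
        sum_le_sum_of_subset_of_nonneg (filter_subset _ _) fun n _ _ =>
          sub_nonneg.mpr (hp n.le_succ)
    _ = p b - p a := sum_Ico_sub p hab

lemma nth_prime_le_of_lt_primeCounting {k m : ℕ} (h : k < π m) : Nat.nth Nat.Prime k ≤ m :=
  Nat.lt_succ_iff.mp (Nat.nth_lt_of_lt_count h)

lemma eventually_mul_div_log_le_primeCounting {c : ℝ} (hc : c < log 2) :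
    ∀ᶠ x : ℝ in atTop, c * x / log x ≤ π ⌊x⌋₊ := by
  have hδ : 0 < (log 2 - c) / 2 := by linarith
  filter_upwards [isLittleO_log_id_atTop.bound hδ, eventually_ge_atTop 2,
    eventually_ge_atTop (4 * log 2 / (log 2 - c))] with x hlog hx2 hxc
  have hlogx : 0 < log x := log_pos (by linarith)
  refine le_trans ?_ (Chebyshev.pi_ge' (by linarith))
  gcongr
  have : log (x + 2) ≤ log 2 + log x := by
    rw [← log_mul two_ne_zero (by linarith)]
    exact log_le_log (by linarith) (by linarith)
  rw [norm_of_nonneg hlogx.le, id, norm_of_nonneg (by linarith)] at hlog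
  rw [div_le_iff₀ (by linarith)] at hxc
  nlinarith

lemma isLittleO_nth_prime :
    (fun n : ℕ => (Nat.nth Nat.Prime n : ℝ)) =o[atTop] fun n => n * √n := by
  -- For `x = ε n √n` we have `log x ≤ 2 log n ≤ ε √n / 4`, so `π x ≥ x / (2 log x) > n`.
  refine IsLittleO.of_bound fun ε hε => ?_
  have hx : Tendsto (fun n : ℕ => ε * n * √n) atTop atTop := by
    refine tendsto_atTop_mono' atTop ?_ (tendsto_natCast_atTop_atTop.const_mul_atTop hε)
    filter_upwards [eventually_ge_atTop 1] with n hn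
    have : (1 : ℝ) ≤ √n := one_le_sqrt.mpr (by exact_mod_cast hn)
    have : (0 : ℝ) ≤ ε * n := by positivity
    nlinarith
  have hsqrt := (isLittleO_log_rpow_atTop (by norm_num : (0 : ℝ) < 1 / 2)).bound
    (by positivity : 0 < ε / 8)
  filter_upwards [hx.eventually (eventually_mul_div_log_le_primeCounting
      (by linarith [log_two_gt_d9] : (1 / 2 : ℝ) < log 2)),
    hx.eventually (eventually_ge_atTop 2), tendsto_natCast_atTop_atTop.eventually hsqrt,
    eventually_ge_atTop ⌈ε ^ 2⌉₊, eventually_ge_atTop 2] with n hpi hx2 hlog hnε hn2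
  set x := ε * n * √n
  have hn : (2 : ℝ) ≤ n := by exact_mod_cast hn2
  have hsqrt_pos : 0 < √(n : ℝ) := sqrt_pos.mpr (by linarith)
  have hε_le : ε ≤ √n := le_sqrt_of_sq_le (le_trans (Nat.le_ceil _) (by exact_mod_cast hnε))
  have hlog_pos : 0 < log n := log_pos (by linarith)
  have hlog_x : log x ≤ 2 * log n := by
    rw [← Nat.cast_ofNat, ← log_pow]
    refine log_le_log (by linarith) ?_
    calc x ≤ √n * n * √n := by simp only [x]; gcongr
      _ = n ^ 2 := by rw [mul_right_comm, mul_self_sqrt (by linarith), sq]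
  rw [norm_of_nonneg hlog_pos.le, ← sqrt_eq_rpow, norm_of_nonneg hsqrt_pos.le] at hlog
  have hcount : n < π ⌊x⌋₊ := by
    have : (n : ℝ) < 1 / 2 * x / log x := by
      rw [lt_div_iff₀ (log_pos (by linarith))]
      have : 0 < ε * n := by positivity
      nlinarith
    exact_mod_cast this.trans_le hpi
  rw [norm_of_nonneg (by positivity), norm_of_nonneg (by positivity), ← mul_assoc]
  exact le_trans (by exact_mod_cast nth_prime_le_of_lt_primeCounting hcount)
    (Nat.floor_le (by linarith))

theorem prime_gap_count_general :
    ∀ᶠ N : ℕ in atTop,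
      (((Finset.Ico N (2 * N)).filter (fun n =>
        (Nat.nth Nat.Prime n : ℝ) + Real.sqrt (Nat.nth Nat.Prime n) <
          (Nat.nth Nat.Prime (n + 1) : ℝ))).card : ℝ) < (N : ℝ) / 2 := by
  set p : ℕ → ℝ := fun n => Nat.nth Nat.Prime n
  have hp : Monotone p :=
    Nat.mono_cast.comp (Nat.nth_strictMono Nat.infinite_setOfPred_prime).monotone
  have h2N : Tendsto (fun N : ℕ => 2 * N) atTop atTop :=
    tendsto_atTop_mono (fun N => Nat.le_mul_of_pos_left N two_pos) tendsto_id
  filter_upwards [h2N.eventually (isLittleO_nth_prime.bound (by norm_num : (0 : ℝ) < 1 / 8)),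
    eventually_gt_atTop 0] with N hbound hN
  have hNpos : (0 : ℝ) < N := by exact_mod_cast hN
  have hgaps := card_filter_add_lt_mul_le hp (t := fun n => √(p n)) (c := √N) (b := 2 * N)
    (by omega) fun n hn => sqrt_le_sqrt <| Nat.cast_le.mpr <|
      (mem_Ico.mp hn).1.trans ((n.le_add_right 2).trans (Nat.add_two_le_nth_prime n))
  have hpN : 0 < p N := Nat.cast_pos.mpr (Nat.prime_nth_prime N).pos
  have hp2N : p (2 * N) < N / 2 * √N := by
    rw [norm_of_nonneg (by positivity), norm_of_nonneg (by positivity)] at hbound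
    push_cast at hbound
    rw [sqrt_mul zero_le_two] at hbound
    change p (2 * N) ≤ _ at hbound
    have := mul_pos hNpos (sqrt_pos.mpr hNpos)
    nlinarith [sqrt_two_lt_three_halves]
  exact lt_of_mul_lt_mul_right (by linarith) (sqrt_nonneg (N : ℝ))

theorem prime_gap_count (ε : ℝ) (hε0 : 0 < ε) (hε : ε < 1 / 2) :
    ∀ᶠ N : ℕ in atTop,
      (((Finset.Ico N (2 * N)).filter (fun n =>
        (Nat.nth Nat.Prime n : ℝ) + Real.sqrt (Nat.nth Nat.Prime n) <
          (Nat.nth Nat.Prime (n + 1) : ℝ))).card : ℝ) < (N : ℝ) / 2 :=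
  prime_gap_count_general
end

section
/- Let A > 1, let {a_n}, {b_n} be positive integer sequences, let d : ℕ → ℝ with d n > 1 and convergent infinite product, and suppose a_n^{1/2^n} → A and d_n^{2^n}/b_n → ∞. Then for all sufficiently large n, ∑_{j=0}^∞ b_{n+j}/a_{n+j} ≤ 2·b_n/a_n. -/
/-!
Write `α m = a m ^ (1 / 2 ^ m)`, so that `a m = α m ^ 2 ^ m`. Once `b m ≤ d m ^ 2 ^ m`, the ratio
`b (m + 1) / a (m + 1)` is at most `u m ^ 2 ^ m / a m`, where
`u m = d (m + 1) ^ 2 * α m / α (m + 1) ^ 2`. Convergence of the product forces `d m → 1`, so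
`u m → 1 / A < 1` and `u m ^ 2 ^ m → 0`; since `b m ≥ 1`, eventually
`b (m + 1) / a (m + 1) ≤ (b m / a m) / 2`, and the tail is dominated by a geometric series of
ratio `1 / 2`.
-/

open Filter Topology

theorem Multipliable.tendsto_atTop_one_of_tprod_ne_zero {K : Type*} [Field K] [TopologicalSpace K]
    [IsTopologicalDivisionRing K] {f : ℕ → K} (hf : Multipliable f) (hf0 : ∀ n, f n ≠ 0)
    (hprod : ∏' n, f n ≠ 0) : Tendsto f atTop (𝓝 1) := by
  have hP := hf.tendsto_prod_tprod_nat
  have hquot := (hP.comp (tendsto_add_atTop_nat 1)).div hP hprod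
  rw [div_self hprod] at hquot
  refine hquot.congr fun n => ?_
  have hPn : ∏ i ∈ Finset.range n, f i ≠ 0 := Finset.prod_ne_zero_iff.mpr fun i _ => hf0 i
  show (∏ i ∈ Finset.range (n + 1), f i) / ∏ i ∈ Finset.range n, f i = f n
  rw [Finset.prod_range_succ, mul_div_cancel_left₀ _ hPn]

theorem tendsto_pow_nhds_zero_of_tendsto_of_norm_lt_one {K : Type*} [NormedDivisionRing K]
    {u : ℕ → K} {L : K} {k : ℕ → ℕ} (hu : Tendsto u atTop (𝓝 L)) (hL : ‖L‖ < 1)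
    (hk : Tendsto k atTop atTop) : Tendsto (fun m => u m ^ k m) atTop (𝓝 0) := by
  obtain ⟨c, hLc, hc1⟩ := exists_between hL
  have hc0 : 0 ≤ c := (norm_nonneg L).trans hLc.le
  refine squeeze_zero_norm' ?_ ((tendsto_pow_atTop_nhds_zero_of_lt_one hc0 hc1).comp hk)
  filter_upwards [hu.norm.eventually_le_const hLc] with m hm
  rw [norm_pow]
  exact pow_le_pow_left₀ (norm_nonneg _) hm _

theorem Real.rpow_one_div_two_pow_pow {x : ℝ} (hx : 0 ≤ x) (m : ℕ) :
    (x ^ ((1 : ℝ) / 2 ^ m)) ^ 2 ^ m = x := by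
  simpa [one_div] using Real.rpow_inv_natCast_pow hx (pow_ne_zero m two_ne_zero)

theorem le_geometric_of_succ_le {u : ℕ → ℝ} {q : ℝ} {n : ℕ} (hq : 0 ≤ q)
    (h : ∀ m ≥ n, u (m + 1) ≤ q * u m) (j : ℕ) : u (n + j) ≤ q ^ j * u n := by
  induction j with
  | zero => simp
  | succ j ih =>
    calc u (n + j + 1) ≤ q * u (n + j) := h _ (Nat.le_add_right n j)
      _ ≤ q * (q ^ j * u n) := by gcongr
      _ = q ^ (j + 1) * u n := by ring

theorem tsum_nat_add_le_of_succ_le {u : ℕ → ℝ} {q : ℝ} {n : ℕ} (hu : ∀ m, 0 ≤ u m)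
    (hq0 : 0 ≤ q) (hq1 : q < 1) (h : ∀ m ≥ n, u (m + 1) ≤ q * u m) :
    ∑' j, u (n + j) ≤ u n / (1 - q) := by
  have hgeom : Summable fun j => q ^ j * u n :=
    (summable_geometric_of_lt_one hq0 hq1).mul_right _
  have hle := le_geometric_of_succ_le hq0 h
  calc ∑' j, u (n + j) ≤ ∑' j, q ^ j * u n :=
        (hgeom.of_nonneg_of_le (fun j => hu _) hle).tsum_le_tsum hle hgeom
    _ = u n / (1 - q) := by
        rw [tsum_mul_right, tsum_geometric_of_lt_one hq0 hq1, inv_mul_eq_div]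

theorem eventually_succ_div_le_half_mul {a b e α : ℕ → ℝ} {A : ℝ} (hA : 1 < A)
    (ha : ∀ m, 0 < a m) (hb : ∀ m, 1 ≤ b m) (hαa : ∀ m, α m ^ 2 ^ m = a m)
    (hα : Tendsto α atTop (𝓝 A)) (he : Tendsto e atTop (𝓝 1))
    (hbe : ∀ᶠ m in atTop, b m ≤ e m ^ 2 ^ m) :
    ∀ᶠ m in atTop, b (m + 1) / a (m + 1) ≤ 1 / 2 * (b m / a m) := by
  set u : ℕ → ℝ := fun m => e (m + 1) ^ 2 * α m / α (m + 1) ^ 2 with hu_def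
  have hu : Tendsto u atTop (𝓝 (1 ^ 2 * A / A ^ 2)) :=
    (((he.comp (tendsto_add_atTop_nat 1)).pow 2).mul hα).div
      ((hα.comp (tendsto_add_atTop_nat 1)).pow 2) (by positivity)
  rw [show (1 : ℝ) ^ 2 * A / A ^ 2 = 1 / A by field_simp] at hu
  have hu_pow : ∀ m, u m ^ 2 ^ m = e (m + 1) ^ 2 ^ (m + 1) * a m / a (m + 1) := fun m => by
    simp only [hu_def, div_pow, mul_pow, ← pow_mul, ← pow_succ', hαa]
  have hsmall : ∀ᶠ m in atTop, u m ^ 2 ^ m ≤ 1 / 2 := by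
    have hA' : ‖1 / A‖ < 1 := by
      rw [Real.norm_of_nonneg (by positivity)]
      exact (div_lt_one (by positivity)).mpr hA
    exact ((tendsto_pow_nhds_zero_of_tendsto_of_norm_lt_one hu hA'
      (tendsto_pow_atTop_atTop_of_one_lt one_lt_two)).eventually_le_const (by norm_num))
  filter_upwards [hsmall, (tendsto_add_atTop_nat 1).eventually hbe] with m hm hbm
  have ham := ha m
  have ham' := ha (m + 1)
  calc b (m + 1) / a (m + 1) ≤ e (m + 1) ^ 2 ^ (m + 1) / a (m + 1) := by gcongr
    _ = u m ^ 2 ^ m / a m := by rw [hu_pow]; field_simp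
    _ ≤ 1 / 2 / a m := by gcongr
    _ ≤ 1 / 2 * (b m / a m) := by
        rw [div_eq_mul_one_div (1 / 2)]
        gcongr
        exact hb m

theorem show5 (A : ℝ) (d : ℕ → ℝ) (a b : ℕ → ℤ)
    (hA : 1 < A) (hd : ∀ n, 1 < d n) (hdprod : Multipliable d)
    (ha : ∀ n, 0 < a n) (hb : ∀ n, 0 < b n)
    (assu1 : Tendsto (fun n => (a n : ℝ) ^ ((1 : ℝ) / 2 ^ n)) atTop (nhds A))
    (assu3 : Tendsto (fun n => d n ^ (2 ^ n : ℕ) / (b n : ℝ)) atTop atTop) :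
    ∀ᶠ n in atTop, (∑' j : ℕ, (b (n + j) : ℝ) / (a (n + j) : ℝ)) ≤ 2 * (b n : ℝ) / (a n : ℝ) := by
  have haR : ∀ m, (0 : ℝ) < a m := fun m => by exact_mod_cast ha m
  have hbR : ∀ m, (1 : ℝ) ≤ b m := fun m => by norm_cast; exact hb m
  have hd1 : Tendsto d atTop (𝓝 1) :=
    hdprod.tendsto_atTop_one_of_tprod_ne_zero (fun n => (one_pos.trans (hd n)).ne')
      (one_pos.trans_le (ge_of_tendsto' hdprod.hasProd fun s =>
        Finset.one_le_prod fun n _ => (hd n).le)).ne'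
  have hbd : ∀ᶠ m in atTop, (b m : ℝ) ≤ d m ^ 2 ^ m := by
    filter_upwards [assu3.eventually_ge_atTop 1] with m hm
    rwa [le_div_iff₀ (one_pos.trans_le (hbR m)), one_mul] at hm
  obtain ⟨N, hN⟩ := eventually_atTop.mp <| eventually_succ_div_le_half_mul hA haR hbR
    (fun m => Real.rpow_one_div_two_pow_pow (haR m).le m) assu1 hd1 hbd
  filter_upwards [eventually_ge_atTop N] with n hn
  calc ∑' j, (b (n + j) : ℝ) / a (n + j) ≤ (b n / a n) / (1 - 1 / 2) :=
        tsum_nat_add_le_of_succ_le (u := fun m => (b m : ℝ) / a m) (q := 1 / 2)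
          (fun m => div_nonneg (zero_le_one.trans (hbR m)) (haR m).le) (by norm_num)
          (by norm_num) fun m hm => hN m (hn.trans hm)
    _ = 2 * b n / a n := by ring
end
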